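/- arXiv:2504.20817 — 4 statements merged into one kernel-verified Lean document; each statement's English description precedes it below -/
import Mathlib

section
/- An increasing union of pseudoconvex open subsets of ℂⁿ is pseudoconvex: if Ω_j ⊂ Ω_{j+1} are pseudoconvex open sets and Ω = ⋃_j Ω_j, then Ω is pseudoconvex. -/
open Metric MeasureTheory

noncomputable section

/-- A function `u` is plurisubharmonic on a set `s` in a complex normed space:
upper semicontinuous and satisfying the sub-mean value inequality on every
closed complex disc contained in `s`. -/
def PSHOn {E : Type*} [NormedAddCommGroup E] [NormedSpace ℂ E]
    (u : E → ℝ) (s : Set E) : Prop :=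
  UpperSemicontinuousOn u s ∧
  ∀ a ∈ s, ∀ b : E, ∀ r : ℝ, 0 < r →
    (∀ t : ℂ, ‖t‖ ≤ r → a + t • b ∈ s) →
    u a ≤ (1 / (2 * Real.pi)) *
      ∫ θ in (0:ℝ)..(2 * Real.pi), u (a + ((r : ℂ) * Complex.exp (θ * Complex.I)) • b)

/-- An open set `D` is pseudoconvex if `-log dist(·, Dᶜ)` is plurisubharmonic on `D`. -/
def Pseudoconvex {E : Type*} [NormedAddCommGroup E] [NormedSpace ℂ E]
    (D : Set E) : Prop :=
  PSHOn (fun z => -Real.log (Metric.infDist z Dᶜ)) D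

/-!
A closed disc in `Ω = ⋃ Ωₖ` is compact, so it lies in `Ωₖ` for all large `k`. Writing
`δ_D = infDist · Dᶜ`, we have `δ_{Ωₖ} ≤ δ_Ω`, and `δ_{Ωₖ} → δ_Ω` pointwise because a closed
ball of radius `< δ_Ω(z)` is compact, hence eventually inside `Ωₖ`. Thus
`-log δ_Ω(a) ≤ -log δ_{Ωₖ}(a) ≤ mean of -log δ_{Ωₖ}` over the circle, and the right-hand side
tends to the mean of `-log δ_Ω` by dominated convergence, the integrands being squeezed between
`-log δ_Ω` and `-log δ_{Ω_J}` for a fixed `J` with the disc in `Ω_J`.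
-/

open Filter Topology
open scoped Interval

section BoundaryDistance

variable {X : Type*} [PseudoMetricSpace X] {U V : Set X} {z : X}

def negLogBoundaryDist (U : Set X) (z : X) : ℝ := -Real.log (infDist z Uᶜ)

lemma infDist_compl_pos (hU : IsOpen U) (hne : Uᶜ.Nonempty) (hz : z ∈ U) :
    0 < infDist z Uᶜ :=
  (hU.isClosed_compl.notMem_iff_infDist_pos hne).1 (not_not.2 hz)

lemma continuousOn_negLogBoundaryDist (hU : IsOpen U) :
    ContinuousOn (negLogBoundaryDist U) U := by
  rcases Uᶜ.eq_empty_or_nonempty with hempty | hne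
  · have hzero : negLogBoundaryDist U = fun _ => 0 := by
      funext z
      simp [negLogBoundaryDist, hempty]
    exact hzero ▸ continuousOn_const
  · intro z hz
    exact ((continuous_infDist_pt _).continuousAt.log
      (infDist_compl_pos hU hne hz).ne').neg.continuousWithinAt

lemma negLogBoundaryDist_le_of_subset (hUV : U ⊆ V) (hU : IsOpen U) (hV : Vᶜ.Nonempty)
    (hz : z ∈ U) : negLogBoundaryDist V z ≤ negLogBoundaryDist U z := by
  have hsub : Vᶜ ⊆ Uᶜ := Set.compl_subset_compl.2 hUV
  exact neg_le_neg <| Real.log_le_log (infDist_compl_pos hU (hV.mono hsub) hz)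
    (infDist_le_infDist_of_subset hsub hV)

end BoundaryDistance

lemma IsCompact.eventually_subset_of_monotone {X ι : Type*} [TopologicalSpace X] [Preorder ι]
    [IsDirectedOrder ι] [Nonempty ι] {K : Set X} {U : ι → Set X} (hK : IsCompact K)
    (hU : ∀ i, IsOpen (U i)) (hmono : Monotone U) (hKU : K ⊆ ⋃ i, U i) :
    ∀ᶠ i in atTop, K ⊆ U i := by
  obtain ⟨j, hj⟩ := hK.elim_directed_cover U hU hKU hmono.directed_le
  filter_upwards [eventually_ge_atTop j] with i hi using hj.trans (hmono hi)

section ProperSpace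

variable {X ι : Type*} [PseudoMetricSpace X] [ProperSpace X] [Preorder ι] [IsDirectedOrder ι]
  [Nonempty ι] {U : ι → Set X}

lemma tendsto_infDist_compl_iUnion (hU : ∀ i, IsOpen (U i)) (hmono : Monotone U)
    (hne : (⋃ i, U i)ᶜ.Nonempty) (z : X) :
    Tendsto (fun i => infDist z (U i)ᶜ) atTop (𝓝 (infDist z (⋃ i, U i)ᶜ)) := by
  have hsub : ∀ i, (⋃ i, U i)ᶜ ⊆ (U i)ᶜ := fun i =>
    Set.compl_subset_compl.2 (Set.subset_iUnion U i)
  refine tendsto_order.2 ⟨fun ρ hρ => ?_, fun ρ hρ => ?_⟩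
  · obtain ⟨ρ', hρρ', hρ'⟩ := exists_between hρ
    have hball : closedBall z ρ' ⊆ ⋃ i, U i := by
      intro y hy
      by_contra hyU
      exact (infDist_le_dist_of_mem hyU).not_gt (hρ'.trans_le' (mem_closedBall'.1 hy))
    filter_upwards [(isCompact_closedBall z ρ').eventually_subset_of_monotone hU hmono hball]
      with i hi
    refine hρρ'.trans_le <| (le_infDist (hne.mono (hsub i))).2 fun y hy => ?_
    by_contra hlt
    exact hy (hi (mem_closedBall'.2 (not_le.1 hlt).le))
  · exact Eventually.of_forall fun i =>
      (infDist_le_infDist_of_subset (hsub i) hne).trans_lt hρ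

lemma tendsto_negLogBoundaryDist_iUnion (hU : ∀ i, IsOpen (U i)) (hmono : Monotone U)
    (hne : (⋃ i, U i)ᶜ.Nonempty) {z : X} (hz : z ∈ ⋃ i, U i) :
    Tendsto (fun i => negLogBoundaryDist (U i) z) atTop
      (𝓝 (negLogBoundaryDist (⋃ i, U i) z)) :=
  ((Real.continuousAt_log (infDist_compl_pos (isOpen_iUnion hU) hne hz).ne').tendsto.comp
    (tendsto_infDist_compl_iUnion hU hmono hne z)).neg

end ProperSpace

lemma tendsto_intervalIntegral_of_le_of_le {ι : Type*} {l : Filter ι} [l.IsCountablyGenerated]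
    {μ : Measure ℝ} {a b : ℝ} {F : ι → ℝ → ℝ} {f g h : ℝ → ℝ}
    (hF : ∀ᶠ i in l, AEStronglyMeasurable (F i) (μ.restrict (Ι a b)))
    (hg : IntervalIntegrable g μ a b) (hh : IntervalIntegrable h μ a b)
    (hgF : ∀ᶠ i in l, ∀ x, g x ≤ F i x) (hFh : ∀ᶠ i in l, ∀ x, F i x ≤ h x)
    (hlim : ∀ x, Tendsto (fun i => F i x) l (𝓝 (f x))) :
    Tendsto (fun i => ∫ x in a..b, F i x ∂μ) l (𝓝 (∫ x in a..b, f x ∂μ)) := by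
  refine intervalIntegral.tendsto_integral_filter_of_dominated_convergence
    (fun x => |g x| + |h x|) hF ?_ (hg.abs.add hh.abs) (ae_of_all _ fun x _ => hlim x)
  filter_upwards [hgF, hFh] with i hgi hhi
  exact ae_of_all _ fun x _ => (abs_le_max_abs_abs (hgi x) (hhi x)).trans
    (max_le_add_of_nonneg (abs_nonneg _) (abs_nonneg _))

section Pseudoconvex

variable {E : Type*} [NormedAddCommGroup E] [NormedSpace ℂ E]

lemma pseudoconvex_iff_pshOn_negLogBoundaryDist {D : Set E} :
    Pseudoconvex D ↔ PSHOn (negLogBoundaryDist D) D :=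
  Iff.rfl

-- `infDist z ∅ = 0` and `Real.log 0 = 0`, so the weight vanishes identically.
lemma pseudoconvex_univ : Pseudoconvex (Set.univ : Set E) := by
  have hzero : negLogBoundaryDist (Set.univ : Set E) = fun _ => 0 := by
    funext z
    simp [negLogBoundaryDist]
  refine pseudoconvex_iff_pshOn_negLogBoundaryDist.2 ⟨hzero ▸ upperSemicontinuousOn_const, ?_⟩
  intro a _ b r _ _
  simp [hzero]

lemma eventually_closedDisc_subset {ι : Type*} [Preorder ι] [IsDirectedOrder ι] [Nonempty ι]
    {U : ι → Set E} (hU : ∀ i, IsOpen (U i)) (hmono : Monotone U) {a b : E} {r : ℝ}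
    (hdisc : ∀ t : ℂ, ‖t‖ ≤ r → a + t • b ∈ ⋃ i, U i) :
    ∀ᶠ i in atTop, ∀ t : ℂ, ‖t‖ ≤ r → a + t • b ∈ U i := by
  have hK : IsCompact ((fun t : ℂ => a + t • b) '' closedBall 0 r) :=
    (isCompact_closedBall 0 r).image (by fun_prop)
  have hKU : (fun t : ℂ => a + t • b) '' closedBall 0 r ⊆ ⋃ i, U i := by
    rintro _ ⟨t, ht, rfl⟩
    exact hdisc t (mem_closedBall_zero_iff.1 ht)
  filter_upwards [hK.eventually_subset_of_monotone hU hmono hKU] with i hi t ht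
  exact hi ⟨t, mem_closedBall_zero_iff.2 ht, rfl⟩

variable [ProperSpace E]

lemma negLogBoundaryDist_iUnion_le_circleMean {U : ℕ → Set E} (hU : ∀ k, IsOpen (U k))
    (hmono : Monotone U) (hpc : ∀ k, Pseudoconvex (U k)) (hne : (⋃ k, U k)ᶜ.Nonempty)
    {a b : E} {r : ℝ} (hr : 0 < r) (hdisc : ∀ t : ℂ, ‖t‖ ≤ r → a + t • b ∈ ⋃ k, U k) :
    negLogBoundaryDist (⋃ k, U k) a ≤ (1 / (2 * Real.pi)) * ∫ θ in (0:ℝ)..(2 * Real.pi),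
      negLogBoundaryDist (⋃ k, U k) (a + ((r : ℂ) * Complex.exp (θ * Complex.I)) • b) := by
  set p : ℝ → E := fun θ => a + ((r : ℂ) * Complex.exp (θ * Complex.I)) • b
  have hnorm : ∀ θ : ℝ, ‖(r : ℂ) * Complex.exp (θ * Complex.I)‖ ≤ r := fun θ => by
    simp [Complex.norm_exp, abs_of_pos hr]
  obtain ⟨J, hJ⟩ := eventually_atTop.1 (eventually_closedDisc_subset hU hmono hdisc)
  have hcircle : ∀ k ≥ J, ∀ θ, p θ ∈ U k := fun k hk θ => hJ k hk _ (hnorm θ)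
  have hcont : ∀ k ≥ J, Continuous fun θ => negLogBoundaryDist (U k) (p θ) := fun k hk =>
    (continuousOn_negLogBoundaryDist (hU k)).comp_continuous (by fun_prop) (hcircle k hk)
  have hcont_iUnion : Continuous fun θ => negLogBoundaryDist (⋃ k, U k) (p θ) :=
    (continuousOn_negLogBoundaryDist (isOpen_iUnion hU)).comp_continuous (by fun_prop)
      fun θ => hdisc _ (hnorm θ)
  have hle : ∀ k ≥ J, ∀ θ,
      negLogBoundaryDist (⋃ k, U k) (p θ) ≤ negLogBoundaryDist (U k) (p θ) := fun k hk θ =>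
    negLogBoundaryDist_le_of_subset (Set.subset_iUnion U k) (hU k) hne (hcircle k hk θ)
  have hle_J : ∀ k ≥ J, ∀ θ, negLogBoundaryDist (U k) (p θ) ≤ negLogBoundaryDist (U J) (p θ) :=
    fun k hk θ => negLogBoundaryDist_le_of_subset (hmono hk) (hU J)
      (hne.mono (Set.compl_subset_compl.2 (Set.subset_iUnion U k))) (hcircle J le_rfl θ)
  have hmean : Tendsto (fun k => ∫ θ in (0:ℝ)..(2 * Real.pi), negLogBoundaryDist (U k) (p θ))
      atTop (𝓝 (∫ θ in (0:ℝ)..(2 * Real.pi), negLogBoundaryDist (⋃ k, U k) (p θ))) := by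
    refine tendsto_intervalIntegral_of_le_of_le ?_ (hcont_iUnion.intervalIntegrable _ _)
      ((hcont J le_rfl).intervalIntegrable _ _) ?_ ?_ fun θ =>
        tendsto_negLogBoundaryDist_iUnion hU hmono hne (hdisc _ (hnorm θ))
    · filter_upwards [eventually_ge_atTop J] with k hk using (hcont k hk).aestronglyMeasurable
    · filter_upwards [eventually_ge_atTop J] with k hk using hle k hk
    · filter_upwards [eventually_ge_atTop J] with k hk using hle_J k hk
  refine ge_of_tendsto (hmean.const_mul _) ?_
  filter_upwards [eventually_ge_atTop J] with k hk
  have haU : a ∈ U k := by simpa using hJ k hk 0 (by simpa using hr.le)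
  exact (negLogBoundaryDist_le_of_subset (Set.subset_iUnion U k) (hU k) hne haU).trans
    ((pseudoconvex_iff_pshOn_negLogBoundaryDist.1 (hpc k)).2 a haU b r hr (hJ k hk))

theorem Pseudoconvex.iUnion_of_monotone {U : ℕ → Set E} (hU : ∀ k, IsOpen (U k))
    (hmono : Monotone U) (hpc : ∀ k, Pseudoconvex (U k)) : Pseudoconvex (⋃ k, U k) := by
  rcases (⋃ k, U k)ᶜ.eq_empty_or_nonempty with hempty | hne
  · rw [Set.compl_empty_iff.1 hempty]
    exact pseudoconvex_univ
  exact pseudoconvex_iff_pshOn_negLogBoundaryDist.2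
    ⟨(continuousOn_negLogBoundaryDist (isOpen_iUnion hU)).upperSemicontinuousOn,
      fun a _ b r hr hdisc => negLogBoundaryDist_iUnion_le_circleMean hU hmono hpc hne hr hdisc⟩

end Pseudoconvex

/-- An increasing union of pseudoconvex open sets is pseudoconvex. -/
theorem increasing_union_pseudoconvex {n : ℕ}
    (Ω : ℕ → Set (EuclideanSpace ℂ (Fin n)))
    (hopen : ∀ j, IsOpen (Ω j))
    (hincr : ∀ j, Ω j ⊆ Ω (j + 1))
    (hpc : ∀ j, Pseudoconvex (Ω j)) :
    Pseudoconvex (⋃ j, Ω j) :=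
  Pseudoconvex.iUnion_of_monotone hopen (monotone_nat_of_le_succ hincr) hpc
end
end

section
/- Let T be a function in C^{0,α}(U'), v ∈ W^{2,p}(U') with p > 3, α ∈ (3/p,1), and θ_δ a standard mollifier at scale δ on ℝ³. Then for x ∈ U'^δ, |T(x)·(∂²(v∗θ_δ)/∂x_j∂x_k)(x) − ((T·∂²v/∂x_j∂x_k)∗θ_δ)(x)| ≤ C ‖T‖_{C^{0,α}} ‖v‖_{W^{2,p}} δ^{α − 3/p}, where C depends only on θ. In particular this error tends to 0 as δ → 0. -/
open Metric MeasureTheory Set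

noncomputable section

abbrev E3 := EuclideanSpace ℝ (Fin 3)

/-- The `j`-th standard basis vector of `ℝ³`. -/
def e3 (j : Fin 3) : E3 := EuclideanSpace.single j 1

/-- The mollifier at scale `δ`: `θ_δ(x) = δ⁻³ θ(x/δ)`. -/
def mollifierAt (θ : E3 → ℝ) (δ : ℝ) : E3 → ℝ := fun y => (1 / δ ^ 3) * θ (δ⁻¹ • y)

lemma norm_e3 (j : Fin 3) : ‖e3 j‖ = 1 := by
  simp [e3, EuclideanSpace.norm_single]

variable {θ : E3 → ℝ} {δ : ℝ}

lemma mollifierAt_eq : mollifierAt θ δ = fun y => (1 / δ ^ 3) * θ ((0 : E3) + δ⁻¹ • y) := by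
  funext y; simp [mollifierAt]

lemma tsupport_theta_subset (hθsupp : Function.support θ ⊆ ball (0:E3) 1) :
    tsupport θ ⊆ closedBall (0:E3) 1 :=
  closure_minimal (hθsupp.trans ball_subset_closedBall) Metric.isClosed_closedBall

lemma theta_cpt (hθsupp : Function.support θ ⊆ ball (0:E3) 1) : HasCompactSupport θ :=
  HasCompactSupport.of_support_subset_isCompact (isCompact_closedBall _ _)
    (hθsupp.trans ball_subset_closedBall)

lemma D2theta_zero (hθsupp : Function.support θ ⊆ ball (0:E3) 1) {z : E3} (hz : 1 < ‖z‖) :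
    fderiv ℝ (fderiv ℝ θ) z = 0 := by
  apply Function.notMem_support.mp
  intro hs
  have h1 : z ∈ tsupport (fderiv ℝ θ) := support_fderiv_subset ℝ hs
  have h2 : z ∈ tsupport θ := tsupport_fderiv_subset ℝ h1
  have := tsupport_theta_subset hθsupp h2
  simp only [mem_closedBall, dist_zero_right] at this
  linarith

lemma theta_zero (hθsupp : Function.support θ ⊆ ball (0:E3) 1) {z : E3} (hz : 1 ≤ ‖z‖) :
    θ z = 0 := by
  by_contra h
  have := hθsupp h
  simp only [mem_ball, dist_zero_right] at this
  linarith

lemma s_seq_facts (hδ : 0 < δ) :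
    ∀ n : ℕ, δ⁻¹ < δ⁻¹ * (1 + ((n:ℝ)+1)⁻¹) ∧ δ⁻¹ * (1 + ((n:ℝ)+1)⁻¹) ≤ 2 * δ⁻¹ ∧
      (δ⁻¹ * (1 + ((n:ℝ)+1)⁻¹))⁻¹ < δ := by
  intro n
  have h1 : (0:ℝ) < (n:ℝ) + 1 := by positivity
  have h2 : ((n:ℝ)+1)⁻¹ ≤ 1 := by
    rw [inv_le_one_iff₀]; right; linarith
  have h3 : (0:ℝ) < ((n:ℝ)+1)⁻¹ := by positivity
  have hδi : (0:ℝ) < δ⁻¹ := by positivity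
  refine ⟨by nlinarith, by nlinarith, ?_⟩
  have hgt : δ⁻¹ < δ⁻¹ * (1 + ((n:ℝ)+1)⁻¹) := by nlinarith
  calc (δ⁻¹ * (1 + ((n:ℝ)+1)⁻¹))⁻¹ < (δ⁻¹)⁻¹ := by
        apply inv_strictAnti₀ hδi hgt
    _ = δ := inv_inv δ

lemma s_seq_tendsto (hδ : 0 < δ) :
    Filter.Tendsto (fun n : ℕ => δ⁻¹ * (1 + ((n:ℝ)+1)⁻¹)) Filter.atTop (nhds δ⁻¹) := by
  have h : Filter.Tendsto (fun n : ℕ => ((n:ℝ)+1)⁻¹) Filter.atTop (nhds 0) := by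
    simpa using tendsto_one_div_add_atTop_nhds_zero_nat (𝕜 := ℝ)
  have h2 : Filter.Tendsto (fun n : ℕ => (1:ℝ) + ((n:ℝ)+1)⁻¹) Filter.atTop (nhds 1) := by
    simpa using (tendsto_const_nhds (x := (1:ℝ)) (f := Filter.atTop (α := ℕ))).add h
  simpa using h2.const_mul δ⁻¹

lemma hasFDerivAt_affine' (c : ℝ) (b : E3) (y : E3) :
    HasFDerivAt (fun y : E3 => b + c • y) (c • ContinuousLinearMap.id ℝ E3) y := by
  simpa using ((hasFDerivAt_id y).const_smul c).const_add b

lemma contDiff_affine_comp (hθ : ContDiff ℝ (⊤ : ℕ∞) θ) (k c : ℝ) (b : E3) :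
    ContDiff ℝ (⊤ : ℕ∞) (fun y => k * θ (b + c • y)) :=
  contDiff_const.mul (hθ.comp (contDiff_const.add (contDiff_id.const_smul c)))

lemma fderiv_affine_comp (hθ : ContDiff ℝ (⊤ : ℕ∞) θ) (k c : ℝ) (b : E3) (y : E3) :
    fderiv ℝ (fun y => k * θ (b + c • y)) y = (k * c) • fderiv ℝ θ (b + c • y) := by
  have hA := hasFDerivAt_affine' c b y
  have hθy : HasFDerivAt θ (fderiv ℝ θ (b + c • y)) (b + c • y) :=
    (hθ.differentiable (by simp) (b + c • y)).hasFDerivAt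
  have h : HasFDerivAt (fun y : E3 => θ (b + c • y))
      ((fderiv ℝ θ (b + c • y)).comp (c • ContinuousLinearMap.id ℝ E3)) y := hθy.comp y hA
  have h2 := h.const_mul k
  rw [h2.fderiv]
  ext v
  simp [mul_comm, mul_assoc, mul_left_comm]

lemma fderiv2_affine_comp (hθ : ContDiff ℝ (⊤ : ℕ∞) θ) (k c : ℝ) (b : E3) (y : E3) (a₁ a₂ : E3) :
    fderiv ℝ (fderiv ℝ (fun y => k * θ (b + c • y))) y a₁ a₂
      = (k * c ^ 2) * fderiv ℝ (fderiv ℝ θ) (b + c • y) a₁ a₂ := by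
  have hfun : fderiv ℝ (fun y => k * θ (b + c • y))
      = fun y => (k * c) • fderiv ℝ θ (b + c • y) := funext (fderiv_affine_comp hθ k c b)
  rw [hfun]
  have hA := hasFDerivAt_affine' c b y
  have hD : HasFDerivAt (fderiv ℝ θ) (fderiv ℝ (fderiv ℝ θ) (b + c • y)) (b + c • y) :=
    ((hθ.fderiv_right (m := (⊤ : ℕ∞)) (by simp)).differentiable (by simp) (b + c • y)).hasFDerivAt
  have h : HasFDerivAt (fun y : E3 => fderiv ℝ θ (b + c • y))
      ((fderiv ℝ (fderiv ℝ θ) (b + c • y)).comp (c • ContinuousLinearMap.id ℝ E3)) y :=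
    hD.comp y hA
  have h2 : HasFDerivAt (fun y => (k * c) • fderiv ℝ θ (b + c • y)) _ y := h.const_smul (k * c)
  rw [h2.fderiv]
  simp only [ContinuousLinearMap.coe_smul', Pi.smul_apply, ContinuousLinearMap.coe_comp',
    Function.comp_apply, ContinuousLinearMap.smul_apply, ContinuousLinearMap.coe_id', id_eq,
    _root_.map_smul, smul_eq_mul]
  ring


lemma conv_second_deriv (v g : E3 → ℝ) (hv : LocallyIntegrable v volume)
    (hg : ContDiff ℝ (⊤ : ℕ∞) g) (hcg : HasCompactSupport g) (x a b : E3) :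
    iteratedFDeriv ℝ 2 (convolution v g (ContinuousLinearMap.mul ℝ ℝ) volume) x ![a, b]
      = ∫ t, v t * fderiv ℝ (fderiv ℝ g) (x - t) a b := by
  set L := ContinuousLinearMap.mul ℝ ℝ
  have hg1 : HasCompactSupport (fderiv ℝ g) := hcg.fderiv ℝ
  have hg1' : ContDiff ℝ (⊤ : ℕ∞) (fderiv ℝ g) := hg.fderiv_right (by simp)
  have hg2 : HasCompactSupport (fderiv ℝ (fderiv ℝ g)) := hg1.fderiv ℝ
  have hg2c : Continuous (fderiv ℝ (fderiv ℝ g)) :=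
    (hg1'.fderiv_right (m := (⊤ : ℕ∞)) (by simp)).continuous
  have h1 : fderiv ℝ (convolution v g L volume)
      = convolution v (fderiv ℝ g) (L.precompR E3) volume := by
    funext z
    exact (hcg.hasFDerivAt_convolution_right L hv (hg.of_le (by simp)) z).fderiv
  have h2 : fderiv ℝ (convolution v (fderiv ℝ g) (L.precompR E3) volume) x
      = convolution (𝕜 := ℝ) v (fderiv ℝ (fderiv ℝ g)) ((L.precompR E3).precompR E3) volume x :=
    (hg1.hasFDerivAt_convolution_right (L.precompR E3) hv (hg1'.of_le (by simp)) x).fderiv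
  rw [iteratedFDeriv_two_apply, h1, h2]
  simp only [Matrix.cons_val_zero, Matrix.cons_val_one, Matrix.head_cons]
  have hcb : HasCompactSupport (fun t => fderiv ℝ (fderiv ℝ g) t a) :=
    hg2.comp_left (g := fun m : E3 →L[ℝ] E3 →L[ℝ] ℝ => m a) rfl
  rw [convolution_precompR_apply (L.precompR E3) hv hg2 hg2c x a,
    convolution_precompR_apply L hv hcb (hg2c.clm_apply continuous_const) x b,
    convolution_def]
  simp [L]

lemma clm2_bound_aux {E : Type*} [NormedAddCommGroup E] [NormedSpace ℝ E]
    (f : E → E →L[ℝ] E →L[ℝ] ℝ) (hf : HasCompactSupport f) (hc : Continuous f) :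
    ∃ C, ∀ z, ‖f z‖ ≤ C :=
  HasCompactSupport.exists_bound_of_continuous (E := E →L[ℝ] E →L[ℝ] ℝ) (f := f) hf hc

set_option maxHeartbeats 2000000 in
lemma key_identity
    (hθsm : ContDiff ℝ (⊤ : ℕ∞) θ) (hθsupp : Function.support θ ⊆ ball (0:E3) 1)
    (U' : Set E3)
    (v w : E3 → ℝ) (hvcont : Continuous v) (hv : LocallyIntegrable v volume)
    (hw : LocallyIntegrable w volume)
    (j k : Fin 3)
    (hweak : ∀ φ : E3 → ℝ, ContDiff ℝ (⊤ : ℕ∞) φ → HasCompactSupport φ → tsupport φ ⊆ U' →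
      ∫ z, v z * iteratedFDeriv ℝ 2 φ z ![e3 j, e3 k] = ∫ z, w z * φ z)
    (x : E3) (hδ : 0 < δ) (hball : ball x δ ⊆ U') :
    ∫ t, v t * fderiv ℝ (fderiv ℝ (mollifierAt θ δ)) (x - t) (e3 j) (e3 k)
      = ∫ y, w y * mollifierAt θ δ (x - y) := by
  set D2 : E3 → E3 →L[ℝ] E3 →L[ℝ] ℝ := fderiv ℝ (fderiv ℝ θ) with hD2def
  have hθcpt := theta_cpt hθsupp
  have hD2c : Continuous D2 :=
    (((hθsm.fderiv_right (m := (⊤ : ℕ∞)) (by simp))).fderiv_right (m := (⊤ : ℕ∞)) (by simp)).continuous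
  obtain ⟨K2, hK2⟩ := clm2_bound_aux D2 ((hθcpt.fderiv ℝ).fderiv ℝ) hD2c
  obtain ⟨Kθ, hKθ⟩ := hθcpt.exists_bound_of_continuous hθsm.continuous
  have hK2_0 : 0 ≤ K2 := le_trans (ContinuousLinearMap.opNorm_nonneg _) (hK2 0)
  have hKθ0 : 0 ≤ Kθ := le_trans (norm_nonneg _) (hKθ 0)
  set s : ℕ → ℝ := fun n => δ⁻¹ * (1 + ((n:ℝ)+1)⁻¹) with hsdef
  have hsf := s_seq_facts hδ
  have hspos : ∀ n, 0 < s n := fun n => lt_trans (by positivity) (hsf n).1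
  -- the test functions
  set φ : ℕ → E3 → ℝ := fun n y => (1/δ^3) * θ ((s n • x) + (-(s n)) • y) with hφdef
  have hrw : ∀ n (y : E3), (s n • x) + (-(s n)) • y = s n • (x - y) := by
    intro n y; rw [smul_sub]; simp [neg_smul, sub_eq_add_neg]
  have hφsupp : ∀ n, Function.support (φ n) ⊆ closedBall x (s n)⁻¹ := by
    intro n y hy
    simp only [hφdef, Function.mem_support] at hy
    have hθne : θ (s n • (x - y)) ≠ 0 := by
      intro h; rw [hrw] at hy; exact hy (by rw [h]; ring)
    have := hθsupp (Function.mem_support.mpr hθne)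
    simp only [mem_ball, dist_zero_right] at this
    rw [norm_smul, Real.norm_eq_abs, abs_of_pos (hspos n)] at this
    have h2 : ‖x - y‖ < (s n)⁻¹ := by
      have h3 := mul_lt_mul_of_pos_left this (inv_pos.mpr (hspos n))
      rwa [← mul_assoc, inv_mul_cancel₀ (ne_of_gt (hspos n)), one_mul, mul_one] at h3
    simp only [mem_closedBall]
    rw [dist_eq_norm, ← norm_sub_rev]
    exact le_of_lt h2
  have hφcpt : ∀ n, HasCompactSupport (φ n) := fun n =>
    HasCompactSupport.of_support_subset_isCompact (isCompact_closedBall _ _) (hφsupp n)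
  have hφts : ∀ n, tsupport (φ n) ⊆ U' := by
    intro n
    refine (closure_minimal (hφsupp n) Metric.isClosed_closedBall).trans ?_
    refine subset_trans ?_ hball
    intro y hy
    simp only [mem_closedBall] at hy
    simp only [mem_ball]
    exact lt_of_le_of_lt hy (hsf n).2.2
  have hφsm : ∀ n, ContDiff ℝ (⊤ : ℕ∞) (φ n) := fun n => contDiff_affine_comp hθsm _ _ _
  have hiter : ∀ n (y : E3), iteratedFDeriv ℝ 2 (φ n) y ![e3 j, e3 k]
      = (1/δ^3 * (s n)^2) * D2 (s n • (x - y)) (e3 j) (e3 k) := by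
    intro n y
    rw [iteratedFDeriv_two_apply]
    simp only [Matrix.cons_val_zero, Matrix.cons_val_one, Matrix.head_cons]
    rw [fderiv2_affine_comp hθsm (1/δ^3) (-(s n)) (s n • x) y (e3 j) (e3 k), hrw, ← hD2def]
    ring_nf
  have heq : ∀ n, ∫ y, v y * ((1/δ^3 * (s n)^2) * D2 (s n • (x - y)) (e3 j) (e3 k))
      = ∫ y, w y * φ n y := by
    intro n
    rw [← hweak (φ n) (hφsm n) (hφcpt n) (hφts n)]
    congr 1
    funext y
    rw [hiter n y]
  -- dominated convergence for the LHS
  have hstend := s_seq_tendsto hδ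
  have hsle : ∀ n, s n ≤ 2 * δ⁻¹ := fun n => (hsf n).2.1
  have hδ3 : (0:ℝ) < 1/δ^3 := by positivity
  have hlim1 : Filter.Tendsto
      (fun n => ∫ y, v y * ((1/δ^3 * (s n)^2) * D2 (s n • (x - y)) (e3 j) (e3 k)))
      Filter.atTop
      (nhds (∫ y, v y * ((1/δ^3 * (δ⁻¹)^2) * D2 (δ⁻¹ • (x - y)) (e3 j) (e3 k)))) := by
    apply tendsto_integral_of_dominated_convergence
      ((closedBall x δ).indicator (fun y => (1/δ^3 * (2*δ⁻¹)^2 * K2) * ‖v y‖))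
    · intro n
      refine (hvcont.mul ?_).aestronglyMeasurable
      exact continuous_const.mul
        (((hD2c.comp ((continuous_const.sub continuous_id).const_smul (s n))).clm_apply
          continuous_const).clm_apply continuous_const)
    · refine IntegrableOn.integrable_indicator ?_ measurableSet_closedBall
      exact ((hv.integrableOn_isCompact (isCompact_closedBall x δ)).norm).const_mul _
    · intro n
      refine Filter.Eventually.of_forall (fun y => ?_)
      by_cases hy : y ∈ closedBall x δ
      · rw [indicator_of_mem hy]
        have hop : ‖D2 (s n • (x - y)) (e3 j) (e3 k)‖ ≤ K2 := by
          have h1 := ContinuousLinearMap.le_opNorm₂ (D2 (s n • (x - y))) (e3 j) (e3 k)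
          rw [norm_e3, norm_e3] at h1
          simpa using h1.trans (by simpa using hK2 (s n • (x - y)))
        rw [norm_mul, norm_mul]
        have hsn := hspos n
        have h2 : ‖(1/δ^3 * (s n)^2 : ℝ)‖ = 1/δ^3 * (s n)^2 := by
          rw [Real.norm_eq_abs, abs_of_pos (by positivity)]
        rw [h2]
        have h3 : (1/δ^3) * (s n)^2 ≤ (1/δ^3) * (2*δ⁻¹)^2 := by
          have := hsle n
          have h4 : (s n)^2 ≤ (2*δ⁻¹)^2 := by nlinarith [hspos n]
          nlinarith
        calc ‖v y‖ * (1/δ^3 * (s n)^2 * ‖D2 (s n • (x - y)) (e3 j) (e3 k)‖)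
            ≤ ‖v y‖ * (1/δ^3 * (2*δ⁻¹)^2 * K2) := by
              refine mul_le_mul_of_nonneg_left ?_ (norm_nonneg _)
              have h5 : 0 ≤ (1/δ^3) * (s n)^2 := by positivity
              nlinarith [norm_nonneg (D2 (s n • (x - y)) (e3 j) (e3 k))]
          _ = 1/δ^3 * (2*δ⁻¹)^2 * K2 * ‖v y‖ := by ring
      · rw [indicator_of_notMem hy]
        have hfar : 1 < ‖s n • (x - y)‖ := by
          rw [norm_smul, Real.norm_eq_abs, abs_of_pos (hspos n)]
          simp only [mem_closedBall, not_le] at hy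
          rw [dist_eq_norm, ← norm_sub_rev] at hy
          have h6 : δ⁻¹ * δ < s n * ‖x - y‖ := by
            apply mul_lt_mul (hsf n).1 (le_of_lt hy) hδ (le_of_lt (hspos n))
          rwa [inv_mul_cancel₀ (ne_of_gt hδ)] at h6
        have h0 : D2 (s n • (x - y)) = 0 := by
          rw [hD2def]; exact D2theta_zero hθsupp hfar
        rw [h0]
        simp
    · refine Filter.Eventually.of_forall (fun y => ?_)
      have hG : Continuous fun r : ℝ => v y * ((1/δ^3 * r^2) * D2 (r • (x - y)) (e3 j) (e3 k)) := by
        refine continuous_const.mul ?_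
        refine ((continuous_const.mul (continuous_pow 2)).mul ?_)
        exact ((hD2c.comp (continuous_id.smul continuous_const)).clm_apply
          continuous_const).clm_apply continuous_const
      exact (hG.tendsto δ⁻¹).comp hstend
  -- dominated convergence for the RHS
  have hlim2 : Filter.Tendsto (fun n => ∫ y, w y * φ n y) Filter.atTop
      (nhds (∫ y, w y * ((1/δ^3) * θ (δ⁻¹ • (x - y))))) := by
    apply tendsto_integral_of_dominated_convergence
      ((closedBall x δ).indicator (fun y => (1/δ^3 * Kθ) * ‖w y‖))
    · intro n
      refine (hw.aestronglyMeasurable.mul ?_)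
      exact (continuous_const.mul (hθsm.continuous.comp
        (continuous_const.add (continuous_id.const_smul (-(s n)))))).aestronglyMeasurable
    · refine IntegrableOn.integrable_indicator ?_ measurableSet_closedBall
      exact ((hw.integrableOn_isCompact (isCompact_closedBall x δ)).norm).const_mul _
    · intro n
      refine Filter.Eventually.of_forall (fun y => ?_)
      by_cases hy : y ∈ closedBall x δ
      · rw [indicator_of_mem hy]
        simp only [hφdef, norm_mul]
        have h2 : ‖(1/δ^3 : ℝ)‖ = 1/δ^3 := by
          rw [Real.norm_eq_abs, abs_of_pos hδ3]
        rw [h2]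
        calc ‖w y‖ * (1/δ^3 * ‖θ (s n • x + -s n • y)‖)
            ≤ ‖w y‖ * (1/δ^3 * Kθ) := by
              gcongr
              exact hKθ _
          _ = 1/δ^3 * Kθ * ‖w y‖ := by ring
      · rw [indicator_of_notMem hy]
        have hfar : 1 ≤ ‖s n • (x - y)‖ := by
          rw [norm_smul, Real.norm_eq_abs, abs_of_pos (hspos n)]
          simp only [mem_closedBall, not_le] at hy
          rw [dist_eq_norm, ← norm_sub_rev] at hy
          have h6 : δ⁻¹ * δ < s n * ‖x - y‖ :=
            mul_lt_mul (hsf n).1 (le_of_lt hy) hδ (le_of_lt (hspos n))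
          rw [inv_mul_cancel₀ (ne_of_gt hδ)] at h6
          exact le_of_lt h6
        simp only [hφdef, hrw, theta_zero hθsupp hfar, mul_zero, norm_zero]
        simp
    · refine Filter.Eventually.of_forall (fun y => ?_)
      have hG : Continuous fun r : ℝ => w y * ((1/δ^3) * θ (r • (x - y))) := by
        refine continuous_const.mul (continuous_const.mul ?_)
        exact hθsm.continuous.comp (continuous_id.smul continuous_const)
      have hfun : (fun n => w y * φ n y)
          = (fun r : ℝ => w y * ((1/δ^3) * θ (r • (x - y)))) ∘ s := by
        funext n
        simp only [Function.comp_apply, hφdef, hrw n y]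
      rw [hfun]
      exact (hG.tendsto δ⁻¹).comp hstend
  -- identify the limits
  have hLHS : (∫ t, v t * fderiv ℝ (fderiv ℝ (mollifierAt θ δ)) (x - t) (e3 j) (e3 k))
      = ∫ y, v y * ((1/δ^3 * (δ⁻¹)^2) * D2 (δ⁻¹ • (x - y)) (e3 j) (e3 k)) := by
    congr 1
    funext t
    rw [mollifierAt_eq, fderiv2_affine_comp hθsm (1/δ^3) δ⁻¹ 0 (x - t) (e3 j) (e3 k)]
    rw [← hD2def]
    simp
  have hRHS : (∫ y, w y * mollifierAt θ δ (x - y))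
      = ∫ y, w y * ((1/δ^3) * θ (δ⁻¹ • (x - y))) := rfl
  rw [hLHS, hRHS]
  have hlim1' := hlim1
  rw [show (fun n => ∫ y, v y * ((1/δ^3 * (s n)^2) * D2 (s n • (x - y)) (e3 j) (e3 k)))
      = (fun n => ∫ y, w y * φ n y) from funext heq] at hlim1'
  exact tendsto_nhds_unique hlim1' hlim2

lemma mollifier_contDiff (hθsm : ContDiff ℝ (⊤ : ℕ∞) θ) : ContDiff ℝ (⊤ : ℕ∞) (mollifierAt θ δ) := by
  rw [mollifierAt_eq]; exact contDiff_affine_comp hθsm _ _ _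

lemma mollifier_support (hθsupp : Function.support θ ⊆ ball (0:E3) 1) (hδ : 0 < δ) :
    Function.support (mollifierAt θ δ) ⊆ ball (0:E3) δ := by
  intro y hy
  simp only [Function.mem_support, mollifierAt] at hy
  have hθne : θ (δ⁻¹ • y) ≠ 0 := fun h => hy (by rw [h]; ring)
  have := hθsupp (Function.mem_support.mpr hθne)
  simp only [mem_ball, dist_zero_right] at this ⊢
  rw [norm_smul, Real.norm_eq_abs, abs_of_pos (inv_pos.mpr hδ)] at this
  have h3 := mul_lt_mul_of_pos_left this hδ
  rwa [← mul_assoc, mul_inv_cancel₀ (ne_of_gt hδ), one_mul, mul_one] at h3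

lemma mollifier_cpt (hθsupp : Function.support θ ⊆ ball (0:E3) 1) (hδ : 0 < δ) :
    HasCompactSupport (mollifierAt θ δ) :=
  HasCompactSupport.of_support_subset_isCompact (isCompact_closedBall _ _)
    ((mollifier_support hθsupp hδ).trans ball_subset_closedBall)

lemma mollifier_zero_of_far (hθsupp : Function.support θ ⊆ ball (0:E3) 1) (hδ : 0 < δ)
    {z : E3} (hz : δ ≤ ‖z‖) : mollifierAt θ δ z = 0 := by
  by_contra h
  have := mollifier_support hθsupp hδ (Function.mem_support.mpr h)
  simp only [mem_ball, dist_zero_right] at this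
  linarith

lemma holder_continuousOn {U' : Set E3} {T : E3 → ℝ} {M α : ℝ} (hα : 0 < α)
    (hHol : ∀ x ∈ U', ∀ y ∈ U', |T x - T y| ≤ M * dist x y ^ α) :
    ContinuousOn T U' := by
  intro y hy
  rw [ContinuousWithinAt, tendsto_iff_dist_tendsto_zero]
  have hd : Filter.Tendsto (fun z : E3 => dist z y) (nhdsWithin y U') (nhds 0) := by
    have h0 : Continuous fun z : E3 => dist z y := continuous_id.dist continuous_const
    have := h0.tendsto y
    simp only [dist_self] at this
    exact this.mono_left nhdsWithin_le_nhds
  have hup : Filter.Tendsto (fun z : E3 => M * dist z y ^ α) (nhdsWithin y U') (nhds 0) := by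
    have hr : Filter.Tendsto (fun z : E3 => dist z y ^ α) (nhdsWithin y U') (nhds 0) := by
      have hc := (Real.continuousAt_rpow_const 0 α (Or.inr hα.le)).tendsto
      rw [Real.zero_rpow (ne_of_gt hα)] at hc
      exact hc.comp hd
    simpa using hr.const_mul M
  apply squeeze_zero' (Filter.Eventually.of_forall fun z => dist_nonneg)
    ?_ hup
  filter_upwards [self_mem_nhdsWithin] with z hz
  rw [Real.dist_eq]
  exact hHol z hz y hy

lemma mollifier_Lq (hδ : 0 < δ) (q : ℝ) (x : E3) :
    ∫ y, ‖mollifierAt θ δ (x - y)‖ ^ q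
      = (1/δ^3)^q * (δ^3 * ∫ z, ‖θ z‖ ^ q) := by
  rw [MeasureTheory.integral_sub_left_eq_self (fun y => ‖mollifierAt θ δ y‖ ^ q) volume x]
  have h1 : ∀ y : E3, ‖mollifierAt θ δ y‖ ^ q = (1/δ^3)^q * ‖θ (δ⁻¹ • y)‖ ^ q := by
    intro y
    rw [mollifierAt, norm_mul, Real.mul_rpow (norm_nonneg _) (norm_nonneg _),
      Real.norm_eq_abs, abs_of_pos (by positivity : (0:ℝ) < 1/δ^3)]
  simp_rw [h1]
  rw [MeasureTheory.integral_const_mul]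
  congr 1
  have := MeasureTheory.Measure.integral_comp_inv_smul_of_nonneg
    (volume : MeasureTheory.Measure E3) (fun z => ‖θ z‖ ^ q) hδ.le
  rw [this]
  simp [finrank_euclideanSpace]


set_option maxHeartbeats 1000000 in
/-- Commutator estimate for mollification: if `T ∈ C^{0,α}(U')` with Hölder constant `M`,
`v` has weak second derivative `∂²v/∂x_j∂x_k = w ∈ L^p(U')` with `p > 3`,
`α ∈ (3/p, 1)`, and `θ_δ` is a standard mollifier, then for `x ∈ U'` at distance `> δ`
from `∂U'`,
`|T(x)·∂²(v∗θ_δ)/∂x_j∂x_k(x) − ((T·w)∗θ_δ)(x)| ≤ C·M·‖w‖_{L^p}·δ^{α−3/p}`,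
with `C` depending only on `θ`. -/
theorem mollification_commutator_estimate
    (θ : E3 → ℝ) (hθsm : ContDiff ℝ (⊤ : ℕ∞) θ) (hθ0 : ∀ x, 0 ≤ θ x)
    (hθsupp : Function.support θ ⊆ ball (0:E3) 1) (hθint : ∫ x, θ x = 1)
    (p α : ℝ) (hp : 3 < p) (hα : α ∈ Ioo (3 / p) 1) :
    ∃ C > (0:ℝ), ∀ (U' : Set E3), IsOpen U' →
      ∀ (T : E3 → ℝ) (M : ℝ), 0 ≤ M →
        (∀ x ∈ U', ∀ y ∈ U', |T x - T y| ≤ M * dist x y ^ α) →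
      ∀ (v w : E3 → ℝ), Continuous v → LocallyIntegrable v volume →
        MemLp w (ENNReal.ofReal p) volume →
      ∀ j k : Fin 3,
        -- `w` is the weak second derivative `∂²v/∂x_j∂x_k` on `U'`:
        (∀ φ : E3 → ℝ, ContDiff ℝ (⊤ : ℕ∞) φ → HasCompactSupport φ → tsupport φ ⊆ U' →
          ∫ x, v x * iteratedFDeriv ℝ 2 φ x ![e3 j, e3 k] = ∫ x, w x * φ x) →
      ∀ (δ : ℝ) (x : E3), 0 < δ → ball x δ ⊆ U' →
        |T x * iteratedFDeriv ℝ 2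
            (MeasureTheory.convolution v (mollifierAt θ δ)
              (ContinuousLinearMap.mul ℝ ℝ) volume) x ![e3 j, e3 k]
          - MeasureTheory.convolution (fun y => T y * w y) (mollifierAt θ δ)
              (ContinuousLinearMap.mul ℝ ℝ) volume x|
        ≤ C * M * (eLpNorm w (ENNReal.ofReal p) volume).toReal * δ ^ (α - 3 / p) := by
  have hp0 : (0:ℝ) < p := by linarith
  have hp1 : (1:ℝ) < p := by linarith
  set q : ℝ := p / (p - 1) with hqdef
  have hpq : p.HolderConjugate q := Real.HolderConjugate.conjExponent hp1
  have hq0 : 0 < q := hpq.symm.pos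
  set Iθ := ∫ z : E3, ‖θ z‖ ^ q with hIθdef
  have hIθ0 : 0 ≤ Iθ := integral_nonneg fun z => Real.rpow_nonneg (norm_nonneg _) _
  set Cθ := Iθ ^ (1/q) with hCθdef
  have hCθ0 : 0 ≤ Cθ := Real.rpow_nonneg hIθ0 _
  refine ⟨Cθ + 1, by positivity, ?_⟩
  intro U' hU' T M hM hHol v w hvcont hv hwmem j k hweak δ x hδ hball
  have hα0 : 0 < α := lt_trans (by positivity) hα.1
  set g := mollifierAt θ δ with hgdef
  have hgsm : ContDiff ℝ (⊤ : ℕ∞) g := mollifier_contDiff hθsm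
  have hgcpt : HasCompactSupport g := mollifier_cpt hθsupp hδ
  have hw_li : LocallyIntegrable w volume :=
    hwmem.locallyIntegrable (by rw [ENNReal.one_le_ofReal]; linarith)
  have hxU : x ∈ U' := hball (mem_ball_self hδ)
  -- Step 1: the second derivative of the mollification is `w ⋆ θ_δ`
  have hA : iteratedFDeriv ℝ 2 (convolution v g (ContinuousLinearMap.mul ℝ ℝ) volume) x
        ![e3 j, e3 k] = ∫ y, w y * g (x - y) := by
    rw [conv_second_deriv v g hv hgsm hgcpt x (e3 j) (e3 k)]
    exact key_identity hθsm hθsupp U' v w hvcont hv hw_li j k hweak x hδ hball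
  rw [hA]
  -- Step 2: rewrite the convolution of `T·w` using an indicator version of `T`
  set T' := (ball x δ).indicator T with hT'def
  have hT'bdd : ∀ y, ‖T' y‖ ≤ ‖T x‖ + M * δ ^ α := by
    intro y
    by_cases hy : y ∈ ball x δ
    · rw [hT'def, indicator_of_mem hy]
      have hyU := hball hy
      have h1 := hHol y hyU x hxU
      have h2 : dist y x ^ α ≤ δ ^ α :=
        Real.rpow_le_rpow dist_nonneg (le_of_lt (mem_ball.mp hy)) hα0.le
      have h3 : |T y - T x| ≤ M * δ ^ α :=
        h1.trans (mul_le_mul_of_nonneg_left h2 hM)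
      rw [Real.norm_eq_abs, Real.norm_eq_abs]
      have := abs_sub_abs_le_abs_sub (T y) (T x)
      linarith [abs_abs (T y)]
    · rw [hT'def, indicator_of_notMem hy]
      simp only [norm_zero]
      positivity
  have hT'm : AEStronglyMeasurable T' volume :=
    (aestronglyMeasurable_indicator_iff measurableSet_ball).mpr
      (((holder_continuousOn hα0 hHol).mono hball).aestronglyMeasurable measurableSet_ball)
  have hwg : Integrable (fun y => w y * g (x - y)) volume := by
    have h1 := hgcpt.convolutionExists_right (ContinuousLinearMap.mul ℝ ℝ) hw_li
      hgsm.continuous x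
    simpa [ConvolutionExistsAt, ContinuousLinearMap.mul_apply'] using h1
  have hg_far : ∀ y : E3, y ∉ ball x δ → g (x - y) = 0 := by
    intro y hy
    apply mollifier_zero_of_far hθsupp hδ
    simp only [mem_ball, not_lt] at hy
    rwa [dist_eq_norm, ← norm_sub_rev] at hy
  have hB : convolution (fun y => T y * w y) g (ContinuousLinearMap.mul ℝ ℝ) volume x
      = ∫ y, T' y * (w y * g (x - y)) := by
    rw [convolution_def]
    congr 1
    funext y
    simp only [ContinuousLinearMap.mul_apply']
    by_cases hy : y ∈ ball x δ
    · rw [hT'def, indicator_of_mem hy]; ring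
    · rw [hg_far y hy, hT'def, indicator_of_notMem hy]; ring
  rw [hB]
  have hInt1 : Integrable (fun y => T x * (w y * g (x - y))) volume := hwg.const_mul _
  have hInt2 : Integrable (fun y => T' y * (w y * g (x - y))) volume :=
    hwg.bdd_mul hT'm (Filter.Eventually.of_forall hT'bdd)
  rw [show T x * ∫ y, w y * g (x - y) = ∫ y, T x * (w y * g (x - y)) from
    (integral_const_mul _ _).symm, ← integral_sub hInt1 hInt2]
  have hpt : ∀ y : E3, T x * (w y * g (x - y)) - T' y * (w y * g (x - y))
      = (T x - T' y) * (w y * g (x - y)) := fun y => by ring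
  simp_rw [hpt]
  have hInt4 : Integrable (fun y => (T x - T' y) * (w y * g (x - y))) volume := by
    simp_rw [← hpt]; exact hInt1.sub hInt2
  have hptle : ∀ y : E3, ‖(T x - T' y) * (w y * g (x - y))‖
      ≤ (M * δ ^ α) * (‖w y‖ * ‖g (x - y)‖) := by
    intro y
    rw [norm_mul, norm_mul]
    by_cases hy : y ∈ ball x δ
    · have hyU := hball hy
      rw [hT'def, indicator_of_mem hy]
      refine mul_le_mul_of_nonneg_right ?_ (by positivity)
      rw [Real.norm_eq_abs]
      refine (hHol x hxU y hyU).trans ?_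
      refine mul_le_mul_of_nonneg_left ?_ hM
      refine Real.rpow_le_rpow dist_nonneg ?_ hα0.le
      rw [dist_comm]
      exact le_of_lt (mem_ball.mp hy)
    · rw [hg_far y hy]
      simp only [norm_zero, mul_zero]
      positivity
  have hInt3 : Integrable (fun y => (M * δ ^ α) * (‖w y‖ * ‖g (x - y)‖)) volume := by
    have h1 := hwg.norm
    simp_rw [norm_mul] at h1
    exact h1.const_mul _
  have hgq : MemLp (fun y => g (x - y)) (ENNReal.ofReal q) volume := by
    refine Continuous.memLp_of_hasCompactSupport
      (hgsm.continuous.comp (continuous_const.sub continuous_id)) ?_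
    refine HasCompactSupport.intro (isCompact_closedBall x δ) ?_
    intro y hy
    exact hg_far y (fun h => hy (ball_subset_closedBall h))
  have hNp : (∫ y, ‖w y‖ ^ p) ^ (1/p) = (eLpNorm w (ENNReal.ofReal p) volume).toReal := by
    rw [hwmem.eLpNorm_eq_integral_rpow_norm
      (by simp only [ne_eq, ENNReal.ofReal_eq_zero, not_le]; linarith) ENNReal.ofReal_ne_top]
    rw [ENNReal.toReal_ofReal (by positivity), ENNReal.toReal_ofReal hp0.le, one_div]
  calc |∫ y, (T x - T' y) * (w y * g (x - y))|
      ≤ ∫ y, ‖(T x - T' y) * (w y * g (x - y))‖ := by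
        rw [← Real.norm_eq_abs]; exact norm_integral_le_integral_norm _
    _ ≤ ∫ y, (M * δ ^ α) * (‖w y‖ * ‖g (x - y)‖) :=
        integral_mono hInt4.norm hInt3 hptle
    _ = (M * δ ^ α) * ∫ y, ‖w y‖ * ‖g (x - y)‖ := integral_const_mul _ _
    _ ≤ (M * δ ^ α) * ((∫ y, ‖w y‖ ^ p) ^ (1/p) * (∫ y, ‖g (x - y)‖ ^ q) ^ (1/q)) := by
        refine mul_le_mul_of_nonneg_left ?_ (by positivity)
        exact integral_mul_norm_le_Lp_mul_Lq hpq hwmem hgq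
    _ ≤ (Cθ + 1) * M * (eLpNorm w (ENNReal.ofReal p) volume).toReal * δ ^ (α - 3/p) := by
        rw [← hNp]
        rw [mollifier_Lq hδ q x]
        have hq_ne : q ≠ 0 := ne_of_gt hq0
        have hsum : q + p = p * q := by
          have h0 := hpq.inv_add_inv_eq_one
          field_simp at h0
          linarith
        have hfact : ((1/δ^3 : ℝ)^q * (δ^3 * Iθ)) ^ (1/q) = δ ^ (-(3/p)) * Cθ := by
          have ec3 : ((3:ℕ):ℝ) = (3:ℝ) := by norm_num
          have e1 : (1/δ^3 : ℝ) = δ ^ (-(3:ℝ)) := by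
            rw [Real.rpow_neg hδ.le, ← ec3, Real.rpow_natCast, one_div]
          have e2 : (δ^3 : ℝ) = δ ^ (3:ℝ) := by
            rw [← ec3, Real.rpow_natCast]
          rw [e1, e2, ← Real.rpow_mul hδ.le, ← mul_assoc, ← Real.rpow_add hδ,
            Real.mul_rpow (Real.rpow_nonneg hδ.le _) hIθ0, ← Real.rpow_mul hδ.le, ← hCθdef]
          congr 2
          field_simp
          nlinarith [hsum]
        rw [hfact]
        have hNp0 : (0:ℝ) ≤ (∫ y, ‖w y‖ ^ p) ^ (1/p) :=
          Real.rpow_nonneg (integral_nonneg fun y => Real.rpow_nonneg (norm_nonneg _) _) _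
        have hδr : δ ^ α * δ ^ (-(3/p)) = δ ^ (α - 3/p) := by
          rw [← Real.rpow_add hδ]
          ring_nf
        have hre : M * δ ^ α * ((∫ y, ‖w y‖ ^ p) ^ (1/p) * (δ ^ (-(3/p)) * Cθ))
            = (Cθ * M * (∫ y, ‖w y‖ ^ p) ^ (1/p)) * (δ ^ α * δ ^ (-(3/p))) := by ring
        rw [hre, hδr, show (Cθ + 1) * M * (∫ y, ‖w y‖ ^ p) ^ (1/p) * δ ^ (α - 3/p)
            = ((Cθ + 1) * M * (∫ y, ‖w y‖ ^ p) ^ (1/p)) * δ ^ (α - 3/p) from by ring]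
        refine mul_le_mul_of_nonneg_right ?_ (Real.rpow_nonneg hδ.le _)
        nlinarith [hCθ0, hM, hNp0]
end
end

section
/- Let φ be a C^{1,1} function on a neighborhood of 0 in ℂ (≅ ℝ²) with φ(0) = 0 and φ(z) ≥ c|z|² for some c > 0 and all z in that neighborhood. Then it is not the case that Δφ ≤ 0 a.e. near 0; more precisely, limsup_{r→0} (2/(π r²)) ∫_{D(0,r)} log(r/|ζ|) Δφ(ζ) dλ₂(ζ) ≥ c > 0. -/
/-!
In polar coordinates `z = s e^{iθ}` one has, almost everywhere (Rademacher's theorem applied to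
`Dφ`), `s Δφ = ∂ₛ(s ∂ₛφ) + s⁻¹ ∂²_θ φ`, and both `s ↦ s ∂ₛφ` and `θ ↦ ∂_θ φ` are Lipschitz.
Integrating the first term in `s` and the second (periodic) one in `θ` gives the flux identity
`∫_{D(0,t)} Δφ = t ∫ ∂ₛφ(t e^{iθ}) dθ`. Writing `log (r/s) = ∫ₛʳ dt/t` and exchanging the
integrals turns the weighted integral into `∫₀ʳ t⁻¹ ∫_{D(0,t)} Δφ dt`, which by the flux identity
and the fundamental theorem of calculus along rays is Green's formula
`∫_{D(0,r)} log(r/|ζ|) Δφ = ∫ φ(r e^{iθ}) dθ - 2π φ(0)`.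
Since `c r² ≤ φ ≤ K r²` on the circle of radius `r` (the upper bound because `Dφ(0) = 0`), the
normalized integrals lie in `[4c, 4K]`; being positive, they rule out `Δφ ≤ 0` since the weight
`log (r/|ζ|)` is nonnegative.
-/

open Metric MeasureTheory Filter Set Complex
open scoped NNReal Real ENNReal Topology

noncomputable section

/-- The a.e.-defined Laplacian of a function `φ : ℂ → ℝ` (junk value where the second
derivative does not exist; for a `C^{1,1}` function it is defined a.e. and bounded). -/
def aeLaplacian (u : ℂ → ℝ) (z : ℂ) : ℝ :=
  fderiv ℝ (fderiv ℝ u) z 1 1 + fderiv ℝ (fderiv ℝ u) z Complex.I Complex.I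

theorem LipschitzOnWith.integral_Ioo_eq_sub_of_ae_hasDerivAt {u g : ℝ → ℝ} {a b : ℝ} {L : ℝ≥0}
    (hab : a ≤ b) (hu : LipschitzOnWith L u (Icc a b))
    (hd : ∀ᵐ s, s ∈ Ioo a b → HasDerivAt u (g s) s) :
    ∫ s in Ioo a b, g s = u b - u a := by
  rw [← uIcc_of_le hab] at hu
  rw [← hu.absolutelyContinuousOnInterval.integral_deriv_eq_sub,
    intervalIntegral.integral_of_le hab, integral_Ioc_eq_integral_Ioo]
  refine setIntegral_congr_ae measurableSet_Ioo ?_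
  filter_upwards [hd] with s hs hsab using (hs hsab).deriv.symm

theorem LipschitzOnWith.clm_apply {α 𝕜 E F : Type*} [PseudoMetricSpace α]
    [NontriviallyNormedField 𝕜] [SeminormedAddCommGroup E] [NormedSpace 𝕜 E]
    [SeminormedAddCommGroup F] [NormedSpace 𝕜 F]
    {u : α → E →L[𝕜] F} {v : α → E} {s : Set α} {Ku Kv Mu Mv : ℝ≥0}
    (hu : LipschitzOnWith Ku u s) (hv : LipschitzOnWith Kv v s)
    (hMu : ∀ t ∈ s, ‖u t‖ ≤ Mu) (hMv : ∀ t ∈ s, ‖v t‖ ≤ Mv) :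
    LipschitzOnWith (Ku * Mv + Mu * Kv) (fun t => u t (v t)) s := by
  refine LipschitzOnWith.of_dist_le_mul fun x hx y hy => ?_
  calc dist (u x (v x)) (u y (v y))
      ≤ ‖(u x - u y) (v x)‖ + ‖u y (v x - v y)‖ := by
        rw [dist_eq_norm, show u x (v x) - u y (v y) = (u x - u y) (v x) + u y (v x - v y) by
          simp]
        exact norm_add_le _ _
    _ ≤ ‖u x - u y‖ * ‖v x‖ + ‖u y‖ * ‖v x - v y‖ :=
        add_le_add (ContinuousLinearMap.le_opNorm _ _) (ContinuousLinearMap.le_opNorm _ _)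
    _ ≤ Ku * dist x y * Mv + Mu * (Kv * dist x y) := by
        rw [← dist_eq_norm, ← dist_eq_norm]
        gcongr
        exacts [hu.dist_le_mul x hx y hy, hMv x hx, hMu y hy, hv.dist_le_mul x hx y hy]
    _ = ↑(Ku * Mv + Mu * Kv) * dist x y := by push_cast; ring

theorem norm_sub_le_mul_sq_of_lipschitzOnWith_fderiv {E F : Type*} [NormedAddCommGroup E]
    [NormedSpace ℝ E] [NormedAddCommGroup F] [NormedSpace ℝ F] {φ : E → F} {K : ℝ≥0} {ρ : ℝ}
    (hφ : ∀ z ∈ closedBall 0 ρ, DifferentiableAt ℝ φ z)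
    (hlip : LipschitzOnWith K (fderiv ℝ φ) (closedBall 0 ρ)) (h0 : fderiv ℝ φ 0 = 0) {z : E}
    (hz : z ∈ closedBall 0 ρ) : ‖φ z - φ 0‖ ≤ K * ‖z‖ ^ 2 := by
  have hsub : closedBall (0 : E) ‖z‖ ⊆ closedBall 0 ρ :=
    closedBall_subset_closedBall (mem_closedBall_zero_iff.1 hz)
  have h0mem : (0 : E) ∈ closedBall 0 ρ := hsub (mem_closedBall_self (norm_nonneg z))
  have hbound : ∀ w ∈ closedBall (0 : E) ‖z‖, ‖fderiv ℝ φ w‖ ≤ K * ‖z‖ := fun w hw => by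
    have := hlip.norm_sub_le (hsub hw) h0mem
    rw [h0, sub_zero, sub_zero] at this
    exact this.trans (by gcongr; exact mem_closedBall_zero_iff.1 hw)
  simpa [sq, mul_assoc] using (convex_closedBall (0 : E) ‖z‖).norm_image_sub_le_of_norm_fderiv_le
    (fun w hw => hφ w (hsub hw)) hbound (mem_closedBall_self (norm_nonneg z))
    (mem_closedBall_zero_iff.2 le_rfl)

@[fun_prop]
theorem Measurable.clm_apply {α 𝕜 E F : Type*} [MeasurableSpace α] [NontriviallyNormedField 𝕜]
    [NormedAddCommGroup E] [NormedSpace 𝕜 E] [NormedAddCommGroup F] [NormedSpace 𝕜 F]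
    [MeasurableSpace E] [BorelSpace E] [MeasurableSpace F] [BorelSpace F]
    [MeasurableSpace (E →L[𝕜] F)] [BorelSpace (E →L[𝕜] F)] [SecondCountableTopology E]
    {u : α → E →L[𝕜] F} {v : α → E} (hu : Measurable u) (hv : Measurable v) :
    Measurable fun a => u a (v a) :=
  isBoundedBilinearMap_apply.continuous.measurable2 hu hv

@[fun_prop]
theorem continuous_circleMap_uncurry (c : ℂ) :
    Continuous fun p : ℝ × ℝ => circleMap c p.1 p.2 := by
  unfold circleMap; fun_prop

theorem hasDerivAt_circleMap_radius (c : ℂ) (R θ : ℝ) :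
    HasDerivAt (fun R => circleMap c R θ) (circleMap 0 1 θ) R := by
  simpa [circleMap] using ((hasDerivAt_id (R : ℝ)).ofReal_comp.mul_const (exp (θ * I))).const_add c

theorem circleMap_zero_eq_smul (R θ : ℝ) : circleMap 0 R θ = R • circleMap 0 1 θ := by
  simp [circleMap_zero, Complex.real_smul]

theorem lipschitzWith_circleMap_radius (c : ℂ) (θ : ℝ) :
    LipschitzWith 1 fun R => circleMap c R θ :=
  LipschitzWith.of_dist_le_mul fun R R' => by
    simp [dist_eq_norm, circleMap, ← sub_mul, ← Complex.ofReal_sub]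

theorem ContinuousLinearMap.apply_add_apply_mul_I (A : ℂ →L[ℝ] ℂ →L[ℝ] ℝ) (w : ℂ) :
    A w w + A (w * I) (w * I) = ‖w‖ ^ 2 * (A 1 1 + A I I) := by
  obtain ⟨a, b, rfl⟩ : ∃ a b : ℝ, w = a • (1 : ℂ) + b • I := ⟨w.re, w.im, by simp⟩
  have hwI : (a • (1 : ℂ) + b • I) * I = (-b) • (1 : ℂ) + a • I := by
    apply Complex.ext <;> simp
  have hnorm : ‖a • (1 : ℂ) + b • I‖ ^ 2 = a ^ 2 + b ^ 2 := by
    rw [Complex.sq_norm, Complex.normSq_apply]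
    simp [sq]
  rw [hwI, hnorm]
  simp only [map_add, map_smul, add_apply, FunLike.coe_smul, Pi.smul_apply, smul_eq_mul]
  ring

theorem integrableOn_Ioo_prod_Ioo_of_norm_le {E : Type*} [NormedAddCommGroup E]
    {F : ℝ × ℝ → E} {a b c d C : ℝ} (hF : AEStronglyMeasurable F)
    (hC : ∀ p ∈ Ioo a b ×ˢ Ioo c d, ‖F p‖ ≤ C) : IntegrableOn F (Ioo a b ×ˢ Ioo c d) :=
  Measure.integrableOn_of_bounded ((isBounded_Ioo a b).prod (isBounded_Ioo c d)).measure_lt_top.ne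
    hF ((ae_restrict_iff' (measurableSet_Ioo.prod measurableSet_Ioo)).2 (.of_forall hC))

theorem integral_log_div_mul_eq_integral_div {g : ℝ → ℝ} {r C : ℝ} (hg : Measurable g)
    (hgC : ∀ s ∈ Ioo 0 r, |g s| ≤ C * s) :
    ∫ s in Ioo 0 r, Real.log (r / s) * g s = ∫ t in Ioo 0 r, (∫ s in Ioo 0 t, g s) / t := by
  set H : ℝ → ℝ → ℝ := fun s t => if s < t then g s / t else 0
  have hlog : ∀ s ∈ Ioo 0 r, Real.log (r / s) * g s = ∫ t in Ioo 0 r, H s t := by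
    intro s ⟨hs, hsr⟩
    calc Real.log (r / s) * g s = ∫ t in Ioo s r, g s / t := by
          have h0 : (0 : ℝ) ∉ uIcc s r := by
            rw [uIcc_of_le hsr.le]
            exact fun h => (not_le.2 hs) h.1
          simp_rw [div_eq_mul_inv, integral_const_mul, ← integral_Ioc_eq_integral_Ioo,
            ← intervalIntegral.integral_of_le hsr.le, integral_inv h0]
          rw [div_eq_mul_inv, mul_comm]
      _ = ∫ t in Ioo 0 r, H s t := by
          have hIoo : Ioo 0 r ∩ Ioi s = Ioo s r := by rw [Ioo_inter_Ioi, max_eq_right hs.le]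
          rw [← hIoo, ← setIntegral_indicator measurableSet_Ioi]
          refine setIntegral_congr_fun measurableSet_Ioo fun t _ => ?_
          simp [H, indicator, mem_Ioi]
  have hslice : ∀ t ∈ Ioo 0 r, ∫ s in Ioo 0 r, H s t = (∫ s in Ioo 0 t, g s) / t := by
    intro t ⟨ht, htr⟩
    have hIoo : Ioo 0 r ∩ Iio t = Ioo 0 t := by rw [Ioo_inter_Iio, min_eq_right htr.le]
    rw [← integral_div, ← hIoo, ← setIntegral_indicator measurableSet_Iio]
    refine setIntegral_congr_fun measurableSet_Ioo fun s _ => ?_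
    simp [H, indicator, mem_Iio]
  have hH : Integrable (Function.uncurry H)
      ((volume.restrict (Ioo 0 r)).prod (volume.restrict (Ioo 0 r))) := by
    rw [Measure.prod_restrict, ← Measure.volume_eq_prod]
    refine integrableOn_Ioo_prod_Ioo_of_norm_le ?_ (C := C) fun p ⟨hp, _⟩ => ?_
    · exact (Measurable.ite (measurableSet_lt measurable_fst measurable_snd)
        ((hg.comp measurable_fst).div measurable_snd) measurable_const).aestronglyMeasurable
    · have hgp := hgC p.1 hp
      have hC : 0 ≤ C := nonneg_of_mul_nonneg_left ((abs_nonneg _).trans hgp) hp.1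
      simp only [Function.uncurry, H]
      split_ifs with hlt
      · have ht : 0 < p.2 := hp.1.trans hlt
        rw [norm_div, Real.norm_eq_abs, Real.norm_of_nonneg ht.le, div_le_iff₀ ht]
        nlinarith
      · simpa using hC
  rw [setIntegral_congr_fun measurableSet_Ioo hlog, integral_integral_swap hH]
  exact setIntegral_congr_fun measurableSet_Ioo hslice

theorem Complex.polarCoord_symm_eq_circleMap (p : ℝ × ℝ) :
    Complex.polarCoord.symm p = circleMap 0 p.1 p.2 := by
  simp [circleMap_zero, Complex.exp_mul_I, ← Complex.ofReal_cos, ← Complex.ofReal_sin]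

theorem integral_ball_eq_setIntegral_polar {E : Type*} [NormedAddCommGroup E] [NormedSpace ℝ E]
    (F : ℂ → E) (r : ℝ) :
    ∫ z in ball (0 : ℂ) r, F z =
      ∫ p in Ioo 0 r ×ˢ Ioo (-π) π, p.1 • F (circleMap 0 p.1 p.2) := by
  have htarget : Complex.polarCoord.target ∩ Prod.fst ⁻¹' Iio r = Ioo 0 r ×ˢ Ioo (-π) π := by
    ext p
    simp only [Complex.polarCoord_target, mem_inter_iff, mem_prod, mem_Ioi, mem_preimage,
      mem_Iio, mem_Ioo]
    tauto
  rw [← integral_indicator measurableSet_ball, ← Complex.integral_comp_polarCoord_symm,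
    ← htarget, ← setIntegral_indicator (measurable_fst measurableSet_Iio)]
  refine setIntegral_congr_fun Complex.polarCoord.open_target.measurableSet fun p hp => ?_
  have hp : 0 < p.1 := hp.1
  rw [Complex.polarCoord_symm_eq_circleMap]
  simp [indicator, norm_circleMap_zero, abs_of_pos hp]

theorem integral_ball_log_div_norm_mul {F : ℂ → ℝ} {r C : ℝ} (hF : Measurable F)
    (hC : ∀ z ∈ ball (0 : ℂ) r, |F z| ≤ C) :
    ∫ z in ball (0 : ℂ) r, Real.log (r / ‖z‖) * F z =
      ∫ s in Ioo 0 r, Real.log (r / s) * ∫ θ in Ioo (-π) π, s * F (circleMap 0 s θ) := by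
  have hint : IntegrableOn (fun p : ℝ × ℝ => Real.log (r / p.1) * (p.1 * F (circleMap 0 p.1 p.2)))
      (Ioo 0 r ×ˢ Ioo (-π) π) := by
    refine integrableOn_Ioo_prod_Ioo_of_norm_le (Measurable.aestronglyMeasurable (by fun_prop))
      (C := r * C) fun p ⟨⟨hs, hsr⟩, _⟩ => ?_
    have hball : circleMap 0 p.1 p.2 ∈ ball 0 r := by
      simpa [norm_circleMap_zero, abs_of_pos hs] using hsr
    have hlog : 0 ≤ Real.log (r / p.1) := Real.log_nonneg ((one_le_div hs).2 hsr.le)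
    have hlog' : p.1 * Real.log (r / p.1) ≤ r := by
      have := Real.log_le_sub_one_of_pos (div_pos (hs.trans hsr) hs)
      rw [mul_comm]
      calc Real.log (r / p.1) * p.1 ≤ (r / p.1 - 1) * p.1 := by gcongr
        _ ≤ r := by rw [sub_mul, div_mul_cancel₀ _ hs.ne']; linarith
    rw [norm_mul, norm_mul, Real.norm_of_nonneg hlog, Real.norm_of_nonneg hs.le, ← mul_assoc,
      mul_comm (Real.log _)]
    exact mul_le_mul hlog' (hC _ hball) (norm_nonneg _) ((mul_nonneg hs.le hlog).trans hlog')
  rw [integral_ball_eq_setIntegral_polar,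
    setIntegral_congr_fun (measurableSet_Ioo.prod measurableSet_Ioo) fun p ⟨⟨hs, _⟩, _⟩ => by
      rw [norm_circleMap_zero, abs_of_pos hs, smul_eq_mul, mul_left_comm],
    Measure.volume_eq_prod, setIntegral_prod _ hint]
  simp only [integral_const_mul]

theorem integral_ball_log_div_norm_mul_nonpos {F : ℂ → ℝ} {r : ℝ}
    (hF : ∀ᵐ z, z ∈ ball (0 : ℂ) r → F z ≤ 0) :
    ∫ z in ball (0 : ℂ) r, Real.log (r / ‖z‖) * F z ≤ 0 := by
  refine integral_nonpos_of_ae ?_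
  filter_upwards [ae_restrict_mem measurableSet_ball, ae_restrict_of_ae hF] with z hzb hz
  refine mul_nonpos_of_nonneg_of_nonpos ?_ (hz hzb)
  rcases eq_or_ne z 0 with rfl | hz0
  · simp
  · exact Real.log_nonneg ((one_le_div (norm_pos_iff.2 hz0)).2 (mem_ball_zero_iff.1 hzb).le)

theorem ae_circleMap_of_ae {P : ℂ → Prop} (h : ∀ᵐ z, P z) :
    ∀ᵐ p : ℝ × ℝ, p ∈ Ioi 0 ×ˢ Ioo (-π) π → P (circleMap 0 p.1 p.2) := by
  set N := toMeasurable volume {z | ¬P z}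
  have hN : MeasurableSet N := measurableSet_toMeasurable _ _
  have hmeas : Measurable fun p : ℝ × ℝ =>
      ENNReal.ofReal p.1 • N.indicator (1 : ℂ → ℝ≥0∞) (circleMap 0 p.1 p.2) := by
    fun_prop
  have hzero := Complex.lintegral_comp_polarCoord_symm (N.indicator (1 : ℂ → ℝ≥0∞))
  simp_rw [Complex.polarCoord_symm_eq_circleMap] at hzero
  rw [lintegral_indicator_one hN, measure_toMeasurable, ae_iff.1 h,
    lintegral_eq_zero_iff hmeas, EventuallyEq,
    ae_restrict_iff' polarCoord.open_target.measurableSet] at hzero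
  filter_upwards [hzero] with p hp hpt
  by_contra hnot
  have hpN : circleMap 0 p.1 p.2 ∈ N := subset_toMeasurable _ {z | ¬P z} hnot
  have := hp hpt
  simp only [indicator, hpN, if_true, Pi.one_apply, smul_eq_mul, mul_one, Pi.zero_apply,
    ENNReal.ofReal_eq_zero] at this
  exact (not_le.2 hpt.1) this

section Polar

variable {f : ℂ → ℂ →L[ℝ] ℝ} {K M : ℝ≥0} {r : ℝ}

/-- At `z = s e^{iθ}`, if `f = Dφ` is differentiable there, `radialTerm f s θ = ∂ₛ(s ∂ₛφ)(z)` and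
`angularTerm f s θ = ∂²_θ φ(z)`; both are written through `fderiv`, so they are defined
everywhere. -/
def radialTerm (f : ℂ → ℂ →L[ℝ] ℝ) (s θ : ℝ) : ℝ :=
  fderiv ℝ f (circleMap 0 s θ) (circleMap 0 1 θ) (circleMap 0 s θ)
    + f (circleMap 0 s θ) (circleMap 0 1 θ)

def angularTerm (f : ℂ → ℂ →L[ℝ] ℝ) (s θ : ℝ) : ℝ :=
  fderiv ℝ f (circleMap 0 s θ) (circleMap 0 s θ * I) (circleMap 0 s θ * I)
    + f (circleMap 0 s θ) (circleMap 0 s θ * I * I)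

theorem measurable_radialTerm (hf : Measurable f) :
    Measurable fun p : ℝ × ℝ => radialTerm f p.1 p.2 := by
  unfold radialTerm; fun_prop

theorem measurable_angularTerm (hf : Measurable f) :
    Measurable fun p : ℝ × ℝ => angularTerm f p.1 p.2 := by
  unfold angularTerm; fun_prop

theorem mapsTo_circleMap_closedBall {S : Set ℝ} {θ : ℝ} (hS : S ⊆ Icc (-r) r) :
    MapsTo (fun s => circleMap 0 s θ) S (closedBall 0 r) := fun s hs => by
  simpa [norm_circleMap_zero, abs_le] using hS hs

theorem integral_radialTerm (hlip : LipschitzOnWith K f (closedBall 0 r))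
    (hM : ∀ z ∈ closedBall 0 r, ‖f z‖ ≤ M) {t θ : ℝ} (ht : 0 ≤ t) (htr : t ≤ r)
    (hdiff : ∀ᵐ s, s ∈ Ioo 0 t → DifferentiableAt ℝ f (circleMap 0 s θ)) :
    ∫ s in Ioo 0 t, radialTerm f s θ = f (circleMap 0 t θ) (circleMap 0 t θ) := by
  have hmaps : MapsTo (fun s => circleMap 0 s θ) (Icc 0 t) (closedBall 0 r) :=
    mapsTo_circleMap_closedBall (Icc_subset_Icc (by linarith) htr)
  have hray : LipschitzOnWith 1 (fun s => circleMap 0 s θ) (Icc 0 t) :=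
    (lipschitzWith_circleMap_radius 0 θ).lipschitzOnWith
  have hu : LipschitzOnWith (K * 1 * r.toNNReal + M * 1)
      (fun s => f (circleMap 0 s θ) (circleMap 0 s θ)) (Icc 0 t) :=
    (hlip.comp hray hmaps).clm_apply hray (fun s hs => hM _ (hmaps hs))
      fun s hs => (mem_closedBall_zero_iff.1 (hmaps hs)).trans (Real.le_coe_toNNReal r)
  have hderiv : ∀ᵐ s, s ∈ Ioo 0 t →
      HasDerivAt (fun s => f (circleMap 0 s θ) (circleMap 0 s θ)) (radialTerm f s θ) s := by
    filter_upwards [hdiff] with s hs hst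
    have hγ := hasDerivAt_circleMap_radius 0 s θ
    have h1 : HasDerivAt (fun R : ℝ => f (circleMap 0 R θ))
        (fderiv ℝ f (circleMap 0 s θ) (circleMap 0 1 θ)) s :=
      (hs hst).hasFDerivAt.comp_hasDerivAt s hγ
    exact h1.clm_apply hγ
  rw [hu.integral_Ioo_eq_sub_of_ae_hasDerivAt ht hderiv]
  simp [circleMap_zero_radius]

theorem integral_angularTerm (hlip : LipschitzOnWith K f (closedBall 0 r))
    (hM : ∀ z ∈ closedBall 0 r, ‖f z‖ ≤ M) {s : ℝ} (hs : 0 ≤ s) (hsr : s ≤ r)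
    (hdiff : ∀ᵐ θ, θ ∈ Ioo (-π) π → DifferentiableAt ℝ f (circleMap 0 s θ)) :
    ∫ θ in Ioo (-π) π, angularTerm f s θ = 0 := by
  have hmaps : MapsTo (circleMap 0 s) (Icc (-π) π) (closedBall 0 r) := fun θ _ => by
    simpa [norm_circleMap_zero, abs_of_nonneg hs] using hsr
  have hcirc := (lipschitzWith_circleMap 0 s).lipschitzOnWith (s := Icc (-π) π)
  have hu := (hlip.comp hcirc hmaps).clm_apply
    (((ContinuousLinearMap.mul ℝ ℂ).flip I).lipschitz.comp_lipschitzOnWith hcirc)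
    (fun θ hθ => hM _ (hmaps hθ)) (Mv := r.toNNReal) fun θ hθ => by
      simpa [norm_circleMap_zero, abs_of_nonneg hs] using hsr.trans (Real.le_coe_toNNReal r)
  rw [hu.integral_Ioo_eq_sub_of_ae_hasDerivAt (by linarith [Real.pi_pos])]
  · have hper : circleMap 0 s π = circleMap 0 s (-π) := by
      simpa [two_mul] using periodic_circleMap 0 s (-π)
    simp [hper]
  filter_upwards [hdiff] with θ hθ hθπ
  exact ((hθ hθπ).hasFDerivAt.comp_hasDerivAt θ (hasDerivAt_circleMap 0 s θ)).clm_apply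
    ((hasDerivAt_circleMap 0 s θ).mul_const I)

theorem integrableOn_radialTerm (hf : Measurable f) (hlip : LipschitzOnWith K f (closedBall 0 r))
    (hM : ∀ z ∈ closedBall 0 r, ‖f z‖ ≤ M) {t : ℝ} (htr : t ≤ r) :
    IntegrableOn (fun p : ℝ × ℝ => radialTerm f p.1 p.2) (Ioo 0 t ×ˢ Ioo (-π) π) := by
  refine integrableOn_Ioo_prod_Ioo_of_norm_le (measurable_radialTerm hf).aestronglyMeasurable
    (C := K * r + M) fun p ⟨⟨hs, hst⟩, _⟩ => ?_
  have hball : circleMap 0 p.1 p.2 ∈ ball 0 r := by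
    simpa [norm_circleMap_zero, abs_of_pos hs] using hst.trans_le htr
  have hK := norm_fderiv_le_of_lipschitzOn ℝ (isOpen_ball.mem_nhds hball)
    (hlip.mono ball_subset_closedBall)
  have hc : ‖circleMap 0 p.1 p.2‖ ≤ r := (mem_ball_zero_iff.1 hball).le
  calc ‖radialTerm f p.1 p.2‖
      ≤ ‖fderiv ℝ f (circleMap 0 p.1 p.2)‖ * ‖circleMap 0 1 p.2‖ * ‖circleMap 0 p.1 p.2‖
        + ‖f (circleMap 0 p.1 p.2)‖ * ‖circleMap 0 1 p.2‖ :=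
        (norm_add_le _ _).trans (add_le_add (ContinuousLinearMap.le_opNorm₂ _ _ _)
          (ContinuousLinearMap.le_opNorm _ _))
    _ ≤ K * 1 * r + M * 1 := by
        rw [norm_circleMap_zero, abs_one]
        gcongr
        exact hM _ (ball_subset_closedBall hball)
    _ = K * r + M := by ring

theorem setIntegral_radialTerm (hf : Measurable f) (hlip : LipschitzOnWith K f (closedBall 0 r))
    (hM : ∀ z ∈ closedBall 0 r, ‖f z‖ ≤ M) {t : ℝ} (ht : 0 ≤ t) (htr : t ≤ r)
    (hdiff : ∀ᵐ p : ℝ × ℝ, p ∈ Ioo 0 t ×ˢ Ioo (-π) π → DifferentiableAt ℝ f (circleMap 0 p.1 p.2)) :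
    ∫ p in Ioo 0 t ×ˢ Ioo (-π) π, radialTerm f p.1 p.2 =
      ∫ θ in Ioo (-π) π, f (circleMap 0 t θ) (circleMap 0 t θ) := by
  have hslices : ∀ᵐ θ, ∀ᵐ s, (s, θ) ∈ Ioo 0 t ×ˢ Ioo (-π) π →
      DifferentiableAt ℝ f (circleMap 0 s θ) := by
    rw [Measure.volume_eq_prod] at hdiff
    exact Measure.ae_ae_of_ae_prod
      ((Measure.measurePreserving_swap.quasiMeasurePreserving).ae hdiff)
  rw [Measure.volume_eq_prod, ← Measure.prod_restrict, integral_prod_symm _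
    (by rw [Measure.prod_restrict, ← Measure.volume_eq_prod]
        exact integrableOn_radialTerm hf hlip hM htr)]
  refine integral_congr_ae ?_
  filter_upwards [ae_restrict_of_ae hslices, ae_restrict_mem measurableSet_Ioo] with θ hθ hθπ
  exact integral_radialTerm hlip hM ht htr
    (by filter_upwards [hθ] with s hs hst using hs ⟨hst, hθπ⟩)

theorem integrableOn_angularTerm_div (hf : Measurable f)
    (hlip : LipschitzOnWith K f (closedBall 0 r)) (hM : ∀ z ∈ closedBall 0 r, ‖f z‖ ≤ M)
    {t : ℝ} (htr : t ≤ r) :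
    IntegrableOn (fun p : ℝ × ℝ => angularTerm f p.1 p.2 / p.1) (Ioo 0 t ×ˢ Ioo (-π) π) := by
  refine integrableOn_Ioo_prod_Ioo_of_norm_le
    ((measurable_angularTerm hf).div measurable_fst).aestronglyMeasurable
    (C := K * r + M) fun p ⟨⟨hs, hst⟩, _⟩ => ?_
  have hball : circleMap 0 p.1 p.2 ∈ ball 0 r := by
    simpa [norm_circleMap_zero, abs_of_pos hs] using hst.trans_le htr
  have hK := norm_fderiv_le_of_lipschitzOn ℝ (isOpen_ball.mem_nhds hball)
    (hlip.mono ball_subset_closedBall)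
  have hc : ‖circleMap 0 p.1 p.2‖ = p.1 := by rw [norm_circleMap_zero, abs_of_pos hs]
  rw [norm_div, Real.norm_of_nonneg hs.le, div_le_iff₀ hs]
  calc ‖angularTerm f p.1 p.2‖
      ≤ ‖fderiv ℝ f (circleMap 0 p.1 p.2)‖ * ‖circleMap 0 p.1 p.2 * I‖
          * ‖circleMap 0 p.1 p.2 * I‖ + ‖f (circleMap 0 p.1 p.2)‖ * ‖circleMap 0 p.1 p.2 * I * I‖ :=
        (norm_add_le _ _).trans (add_le_add (ContinuousLinearMap.le_opNorm₂ _ _ _)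
          (ContinuousLinearMap.le_opNorm _ _))
    _ ≤ K * p.1 * p.1 + M * p.1 := by
        simp only [norm_mul, norm_I, mul_one, hc]
        gcongr
        exact hM _ (ball_subset_closedBall hball)
    _ ≤ (K * r + M) * p.1 := by
        have : p.1 ≤ r := (hst.trans_le htr).le
        nlinarith [mul_le_mul_of_nonneg_left this (mul_nonneg K.coe_nonneg hs.le)]

theorem setIntegral_angularTerm_div (hf : Measurable f)
    (hlip : LipschitzOnWith K f (closedBall 0 r)) (hM : ∀ z ∈ closedBall 0 r, ‖f z‖ ≤ M)
    {t : ℝ} (htr : t ≤ r)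
    (hdiff : ∀ᵐ p : ℝ × ℝ, p ∈ Ioo 0 t ×ˢ Ioo (-π) π → DifferentiableAt ℝ f (circleMap 0 p.1 p.2)) :
    ∫ p in Ioo 0 t ×ˢ Ioo (-π) π, angularTerm f p.1 p.2 / p.1 = 0 := by
  have hslices : ∀ᵐ s, ∀ᵐ θ, (s, θ) ∈ Ioo 0 t ×ˢ Ioo (-π) π →
      DifferentiableAt ℝ f (circleMap 0 s θ) := by
    rw [Measure.volume_eq_prod] at hdiff
    exact Measure.ae_ae_of_ae_prod hdiff
  rw [Measure.volume_eq_prod, setIntegral_prod _ (by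
    rw [← Measure.volume_eq_prod]; exact integrableOn_angularTerm_div hf hlip hM htr)]
  refine integral_eq_zero_of_ae ?_
  filter_upwards [ae_restrict_of_ae hslices, ae_restrict_mem measurableSet_Ioo] with s hs hst
  rw [integral_div, integral_angularTerm hlip hM hst.1.le (hst.2.le.trans htr)
    (by filter_upwards [hs] with θ hθ hθπ using hθ ⟨hst, hθπ⟩), zero_div, Pi.zero_apply]

end Polar

section Laplacian

variable {φ : ℂ → ℝ} {K M : ℝ≥0} {r : ℝ}

@[fun_prop]
theorem measurable_aeLaplacian (u : ℂ → ℝ) : Measurable fun z => aeLaplacian u z := by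
  have := measurable_fderiv ℝ (fderiv ℝ u)
  unfold aeLaplacian; fun_prop

theorem abs_aeLaplacian_le {u : ℂ → ℝ} {V : Set ℂ} (hlip : LipschitzOnWith K (fderiv ℝ u) V)
    {z : ℂ} (hz : V ∈ 𝓝 z) : |aeLaplacian u z| ≤ 2 * K := by
  have hK := norm_fderiv_le_of_lipschitzOn ℝ hz hlip
  have h1 := (fderiv ℝ (fderiv ℝ u) z).le_opNorm₂ 1 1
  have h2 := (fderiv ℝ (fderiv ℝ u) z).le_opNorm₂ I I
  simp only [norm_one, norm_I, mul_one] at h1 h2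
  rw [aeLaplacian]
  exact (abs_add_le _ _).trans (by rw [← Real.norm_eq_abs, ← Real.norm_eq_abs]; linarith)

theorem mul_aeLaplacian_circleMap {s : ℝ} (hs : s ≠ 0) (θ : ℝ) :
    s * aeLaplacian φ (circleMap 0 s θ) =
      radialTerm (fderiv ℝ φ) s θ + angularTerm (fderiv ℝ φ) s θ / s := by
  have htrace := (fderiv ℝ (fderiv ℝ φ) (circleMap 0 s θ)).apply_add_apply_mul_I (circleMap 0 s θ)
  rw [norm_circleMap_zero, sq_abs] at htrace
  simp only [aeLaplacian, radialTerm, angularTerm, mul_assoc, I_mul_I, mul_neg_one, map_neg]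
  rw [eq_sub_of_add_eq' htrace]
  set A := fderiv ℝ (fderiv ℝ φ) (circleMap 0 s θ)
  set L := fderiv ℝ φ (circleMap 0 s θ)
  rw [circleMap_zero_eq_smul s θ]
  simp only [map_smul, FunLike.coe_smul, Pi.smul_apply, smul_eq_mul]
  field_simp
  ring

theorem integral_integral_mul_aeLaplacian_circleMap
    (hlip : LipschitzOnWith K (fderiv ℝ φ) (closedBall 0 r))
    (hM : ∀ z ∈ closedBall 0 r, ‖fderiv ℝ φ z‖ ≤ M) {t : ℝ} (ht : 0 ≤ t) (htr : t ≤ r) :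
    ∫ s in Ioo 0 t, ∫ θ in Ioo (-π) π, s * aeLaplacian φ (circleMap 0 s θ) =
      t * ∫ θ in Ioo (-π) π, fderiv ℝ φ (circleMap 0 t θ) (circleMap 0 1 θ) := by
  have hf : Measurable (fderiv ℝ φ) := measurable_fderiv ℝ φ
  have hball : ∀ p ∈ Ioo 0 t ×ˢ Ioo (-π) π, circleMap 0 p.1 p.2 ∈ ball 0 r := fun p hp => by
    simpa [norm_circleMap_zero, abs_of_pos hp.1.1] using hp.1.2.trans_le htr
  have hdiff : ∀ᵐ p : ℝ × ℝ, p ∈ Ioo 0 t ×ˢ Ioo (-π) π →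
      DifferentiableAt ℝ (fderiv ℝ φ) (circleMap 0 p.1 p.2) := by
    filter_upwards [ae_circleMap_of_ae
      ((hlip.mono ball_subset_closedBall).ae_differentiableWithinAt_of_mem (μ := volume))]
      with p hp hpt
    exact (hp ⟨hpt.1.1, hpt.2⟩ (hball p hpt)).differentiableAt
      (isOpen_ball.mem_nhds (hball p hpt))
  have hint : IntegrableOn (fun p : ℝ × ℝ => p.1 * aeLaplacian φ (circleMap 0 p.1 p.2))
      (Ioo 0 t ×ˢ Ioo (-π) π) := by
    refine integrableOn_Ioo_prod_Ioo_of_norm_le (Measurable.aestronglyMeasurable (by fun_prop))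
      (C := r * (2 * K)) fun p hp => ?_
    rw [norm_mul, Real.norm_of_nonneg hp.1.1.le]
    exact mul_le_mul (hp.1.2.le.trans htr) (abs_aeLaplacian_le (hlip.mono ball_subset_closedBall)
      (isOpen_ball.mem_nhds (hball p hp))) (norm_nonneg _) (ht.trans htr)
  have hprod : ∫ s in Ioo 0 t, ∫ θ in Ioo (-π) π, s * aeLaplacian φ (circleMap 0 s θ) =
      ∫ p in Ioo 0 t ×ˢ Ioo (-π) π, p.1 * aeLaplacian φ (circleMap 0 p.1 p.2) :=
    (setIntegral_prod _ hint).symm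
  rw [hprod, setIntegral_congr_fun (measurableSet_Ioo.prod measurableSet_Ioo) fun p hp =>
      mul_aeLaplacian_circleMap hp.1.1.ne' p.2,
    integral_add (integrableOn_radialTerm hf hlip hM htr)
      (integrableOn_angularTerm_div hf hlip hM htr),
    setIntegral_radialTerm hf hlip hM ht htr hdiff,
    setIntegral_angularTerm_div hf hlip hM htr hdiff, add_zero, ← integral_const_mul]
  refine setIntegral_congr_fun measurableSet_Ioo fun θ _ => ?_
  rw [circleMap_zero_eq_smul t θ]
  simp only [map_smul, smul_eq_mul]

theorem integral_integral_fderiv_circleMap (hr : 0 ≤ r)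
    (hφ : ∀ z ∈ closedBall 0 r, DifferentiableAt ℝ φ z)
    (hcont : ContinuousOn (fderiv ℝ φ) (closedBall 0 r))
    (hM : ∀ z ∈ closedBall 0 r, ‖fderiv ℝ φ z‖ ≤ M) :
    ∫ t in Ioo 0 r, ∫ θ in Ioo (-π) π, fderiv ℝ φ (circleMap 0 t θ) (circleMap 0 1 θ) =
      (∫ θ in Ioo (-π) π, φ (circleMap 0 r θ)) - 2 * π * φ 0 := by
  have hint : IntegrableOn (fun p : ℝ × ℝ => fderiv ℝ φ (circleMap 0 p.1 p.2) (circleMap 0 1 p.2))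
      (Ioo 0 r ×ˢ Ioo (-π) π) := by
    have := measurable_fderiv ℝ φ
    refine integrableOn_Ioo_prod_Ioo_of_norm_le (Measurable.aestronglyMeasurable (by fun_prop))
      (C := M) fun p ⟨⟨hs, hsr⟩, _⟩ => ?_
    have hmem : circleMap 0 p.1 p.2 ∈ closedBall 0 r := by
      simpa [norm_circleMap_zero, abs_of_pos hs] using hsr.le
    simpa [norm_circleMap_zero] using (ContinuousLinearMap.le_opNorm _ _).trans
      (mul_le_mul_of_nonneg_right (hM _ hmem) (norm_nonneg (circleMap 0 1 p.2)))
  have hray : ∀ θ, ∫ t in Ioo 0 r, fderiv ℝ φ (circleMap 0 t θ) (circleMap 0 1 θ) =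
      φ (circleMap 0 r θ) - φ 0 := fun θ => by
    have hmaps : MapsTo (fun t => circleMap 0 t θ) (uIcc 0 r) (closedBall 0 r) :=
      mapsTo_circleMap_closedBall (by rw [uIcc_of_le hr]; exact Icc_subset_Icc (by linarith) le_rfl)
    have hderiv : ∀ t ∈ uIcc 0 r, HasDerivAt (fun t => φ (circleMap 0 t θ))
        (fderiv ℝ φ (circleMap 0 t θ) (circleMap 0 1 θ)) t := fun t ht =>
      (hφ _ (hmaps ht)).hasFDerivAt.comp_hasDerivAt t (hasDerivAt_circleMap_radius 0 t θ)
    have hcont' :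
        ContinuousOn (fun t => fderiv ℝ φ (circleMap 0 t θ) (circleMap 0 1 θ)) (uIcc 0 r) :=
      (hcont.comp (by fun_prop : Continuous fun t : ℝ => circleMap 0 t θ).continuousOn
        hmaps).clm_apply continuousOn_const
    rw [← integral_Ioc_eq_integral_Ioo, ← intervalIntegral.integral_of_le hr,
      intervalIntegral.integral_eq_sub_of_hasDerivAt hderiv hcont'.intervalIntegrable,
      circleMap_zero_radius, Function.const_apply]
  have hcirc : Continuous fun θ => φ (circleMap 0 r θ) :=
    ContinuousOn.comp_continuous (fun z hz => (hφ z hz).continuousAt.continuousWithinAt)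
      (continuous_circleMap 0 r) (circleMap_mem_closedBall 0 hr)
  rw [integral_integral_swap (by rwa [Measure.prod_restrict, ← Measure.volume_eq_prod]),
    setIntegral_congr_fun measurableSet_Ioo fun θ _ => hray θ,
    integral_sub (hcirc.integrableOn_Icc.mono_set Ioo_subset_Icc_self)
      (integrableOn_const measure_Ioo_lt_top.ne), setIntegral_const,
    Real.volume_real_Ioo_of_le (by linarith [Real.pi_pos]), smul_eq_mul]
  ring

theorem integral_log_mul_aeLaplacian (hr : 0 ≤ r)
    (hφ : ∀ z ∈ closedBall 0 r, DifferentiableAt ℝ φ z)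
    (hlip : LipschitzOnWith K (fderiv ℝ φ) (closedBall 0 r)) :
    ∫ z in ball (0 : ℂ) r, Real.log (r / ‖z‖) * aeLaplacian φ z =
      (∫ θ in Ioo (-π) π, φ (circleMap 0 r θ)) - 2 * π * φ 0 := by
  obtain ⟨C, hC⟩ := (isCompact_closedBall (0 : ℂ) r).exists_bound_of_continuousOn hlip.continuousOn
  have hM : ∀ z ∈ closedBall 0 r, ‖fderiv ℝ φ z‖ ≤ C.toNNReal :=
    fun z hz => (hC z hz).trans (Real.le_coe_toNNReal C)
  have hΔ : ∀ z ∈ ball (0 : ℂ) r, |aeLaplacian φ z| ≤ 2 * K := fun z hz =>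
    abs_aeLaplacian_le (hlip.mono ball_subset_closedBall) (isOpen_ball.mem_nhds hz)
  set g : ℝ → ℝ := fun s => ∫ θ in Ioo (-π) π, s * aeLaplacian φ (circleMap 0 s θ)
  have hg : Measurable g := by
    have : Measurable fun p : ℝ × ℝ => p.1 * aeLaplacian φ (circleMap 0 p.1 p.2) := by fun_prop
    exact this.stronglyMeasurable.integral_prod_right'.measurable
  have hgC : ∀ s ∈ Ioo 0 r, |g s| ≤ 2 * K * (2 * π) * s := fun s ⟨hs, hsr⟩ => by
    have := norm_setIntegral_le_of_norm_le_const
      (measure_Ioo_lt_top (μ := volume) (a := -π) (b := π))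
      (f := fun θ => s * aeLaplacian φ (circleMap 0 s θ)) (C := s * (2 * K)) fun θ _ => by
        rw [norm_mul, Real.norm_of_nonneg hs.le]
        exact mul_le_mul_of_nonneg_left (hΔ _ (by simpa [norm_circleMap_zero, abs_of_pos hs]))
          hs.le
    rw [Real.volume_real_Ioo_of_le (by linarith [Real.pi_pos])] at this
    linarith [this, show |g s| = ‖g s‖ from rfl]
  calc ∫ z in ball (0 : ℂ) r, Real.log (r / ‖z‖) * aeLaplacian φ z
      = ∫ s in Ioo 0 r, Real.log (r / s) * g s :=
        integral_ball_log_div_norm_mul (measurable_aeLaplacian φ) hΔ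
    _ = ∫ t in Ioo 0 r, (∫ s in Ioo 0 t, g s) / t := integral_log_div_mul_eq_integral_div hg hgC
    _ = ∫ t in Ioo 0 r, ∫ θ in Ioo (-π) π, fderiv ℝ φ (circleMap 0 t θ) (circleMap 0 1 θ) :=
        setIntegral_congr_fun measurableSet_Ioo fun t ⟨ht, htr⟩ => by
          rw [integral_integral_mul_aeLaplacian_circleMap hlip hM ht.le htr.le,
            mul_div_cancel_left₀ _ ht.ne']
    _ = (∫ θ in Ioo (-π) π, φ (circleMap 0 r θ)) - 2 * π * φ 0 :=
        integral_integral_fderiv_circleMap hr hφ hlip.continuousOn hM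

end Laplacian

theorem normalized_integral_log_mul_aeLaplacian_mem_Icc {φ : ℂ → ℝ} {K : ℝ≥0} {ρ c r : ℝ}
    (hφ : ∀ z ∈ closedBall 0 ρ, DifferentiableAt ℝ φ z)
    (hlip : LipschitzOnWith K (fderiv ℝ φ) (closedBall 0 ρ)) (hφ0 : φ 0 = 0) (hc : 0 ≤ c)
    (hlb : ∀ z ∈ closedBall 0 ρ, c * ‖z‖ ^ 2 ≤ φ z) (hr : 0 < r) (hrρ : r ≤ ρ) :
    2 / (π * r ^ 2) * ∫ z in ball (0 : ℂ) r, Real.log (r / ‖z‖) * aeLaplacian φ z ∈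
      Icc (4 * c) (4 * K) := by
  have hmin : IsLocalMin φ 0 := Filter.mem_of_superset (closedBall_mem_nhds 0 (hr.trans_le hrρ))
    fun z hz => hφ0 ▸ (mul_nonneg hc (sq_nonneg _)).trans (hlb z hz)
  have hsub : closedBall (0 : ℂ) r ⊆ closedBall 0 ρ := closedBall_subset_closedBall hrρ
  have hcirc : ∀ θ, circleMap 0 r θ ∈ closedBall 0 ρ := fun θ =>
    hsub (circleMap_mem_closedBall 0 hr.le θ)
  have hnorm : ∀ θ, ‖circleMap 0 r θ‖ = r := fun θ => by rw [norm_circleMap_zero, abs_of_pos hr]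
  have hint : IntegrableOn (fun θ => φ (circleMap 0 r θ)) (Ioo (-π) π) :=
    (ContinuousOn.comp_continuous (fun z hz => (hφ z hz).continuousAt.continuousWithinAt)
      (continuous_circleMap 0 r) hcirc).integrableOn_Icc.mono_set Ioo_subset_Icc_self
  have hvol : volume.real (Ioo (-π) π) = 2 * π := by
    rw [Real.volume_real_Ioo_of_le (by linarith [Real.pi_pos])]; ring
  have hlow := setIntegral_ge_of_const_le_real measurableSet_Ioo measure_Ioo_lt_top.ne
    (fun θ _ => by simpa only [hnorm] using hlb _ (hcirc θ)) hint
  have hup := norm_setIntegral_le_of_norm_le_const (measure_Ioo_lt_top (μ := volume)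
    (a := -π) (b := π)) (f := fun θ => φ (circleMap 0 r θ)) (C := K * r ^ 2) fun θ _ => by
      simpa [hφ0, hnorm] using norm_sub_le_mul_sq_of_lipschitzOnWith_fderiv hφ hlip
        hmin.fderiv_eq_zero (hcirc θ)
  rw [hvol, Real.norm_eq_abs, abs_le] at hup
  rw [hvol] at hlow
  have hpos : 0 < π * r ^ 2 := by positivity
  rw [integral_log_mul_aeLaplacian hr.le (fun z hz => hφ z (hsub hz)) (hlip.mono hsub), hφ0,
    mul_zero, sub_zero, mem_Icc, div_mul_eq_mul_div, le_div_iff₀ hpos, div_le_iff₀ hpos]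
  constructor <;> nlinarith [hup.2]

/-- If `φ` is `C^{1,1}` near `0 ∈ ℂ`, `φ(0) = 0` and `φ(z) ≥ c|z|²` with `c > 0` near `0`,
then `Δφ` cannot be `≤ 0` a.e. near `0`; more precisely
`limsup_{r→0⁺} (2/(πr²)) ∫_{D(0,r)} log(r/|ζ|) Δφ(ζ) dλ₂(ζ) ≥ c`. -/
theorem laplacian_limsup_lower_bound
    (V : Set ℂ) (hV : IsOpen V) (h0V : (0:ℂ) ∈ V)
    (φ : ℂ → ℝ) (K : NNReal)
    (hdiff : DifferentiableOn ℝ φ V)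
    (hlip : LipschitzOnWith K (fderiv ℝ φ) V)
    (hφ0 : φ 0 = 0)
    (c : ℝ) (hc : 0 < c)
    (hlb : ∀ z ∈ V, c * ‖z‖ ^ 2 ≤ φ z) :
    (¬ ∀ᵐ z, z ∈ V → aeLaplacian φ z ≤ 0) ∧
    c ≤ Filter.limsup (fun r : ℝ =>
        (2 / (Real.pi * r ^ 2)) *
          ∫ z in ball (0:ℂ) r, Real.log (r / ‖z‖) * aeLaplacian φ z)
      (nhdsWithin 0 (Set.Ioi 0)) := by
  obtain ⟨ρ, hρ, hρV⟩ := nhds_basis_closedBall.mem_iff.1 (hV.mem_nhds h0V)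
  have hnormalized := fun r (hr : r ∈ Ioc 0 ρ) =>
    normalized_integral_log_mul_aeLaplacian_mem_Icc
      (fun z hz => hdiff.differentiableAt (hV.mem_nhds (hρV hz))) (hlip.mono hρV) hφ0 hc.le
      (fun z hz => hlb z (hρV hz)) hr.1 hr.2
  refine ⟨fun hneg => ?_, ?_⟩
  · have hnonpos := integral_ball_log_div_norm_mul_nonpos (r := ρ) (F := aeLaplacian φ)
      (by filter_upwards [hneg] with z hz hzb using hz (hρV (ball_subset_closedBall hzb)))
    have := mul_nonpos_of_nonneg_of_nonpos (by positivity : 0 ≤ 2 / (π * ρ ^ 2)) hnonpos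
    linarith [(hnormalized ρ ⟨hρ, le_rfl⟩).1]
  · have hev : ∀ᶠ r in 𝓝[>] (0 : ℝ), r ∈ Ioc 0 ρ := Ioc_mem_nhdsGT hρ
    exact le_limsup_of_frequently_le
      (hev.mono fun r hr => by linarith [(hnormalized r hr).1]).frequently
      (isBoundedUnder_of_eventually_le (hev.mono fun r hr => (hnormalized r hr).2))
end
end

section
/- Transversal slices preserve boundary regularity and measure-zero exceptional sets: let Ω ⊂ ℂⁿ (n ≥ 3) have C^{1,1} boundary near 0 given as {x₁ < φ(y₁, z')} with φ ∈ C^{1,1}, and for t ∈ ℂ^{n−2} let p_t(z₁,z₂) = (z₁, z₂, z₂ t) and Ω^t = p_t^{−1}(Ω) ⊂ ℂ². Then for t sufficiently small, ∂Ω^t is C^{1,1}-smooth near 0 (p_t(ℂ²) is transverse to ∂Ω), and if F ⊂ ∂Ω is closed with λ_{2n−1}(F) = 0, then for Lebesgue-almost every t ∈ ℂ^{n−2}, the slice F^t = p_t^{−1}(F) ⊂ ∂Ω^t satisfies λ₃(F^t) = 0. -/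
open MeasureTheory

/-! Slicing is precomposition with the real-linear map `q_t`, and precomposition with a
continuous linear map preserves `C^{1,1}`. For the null set, use Fubini in `((y₁, z₂), t)`:
for almost every `(y₁, z₂)` we have `z₂ ≠ 0` and the fibre of `G` over `(y₁, z₂)` is null,
so its preimage `{t | (y₁, z₂, z₂ • t) ∈ G}` under the linear automorphism `t ↦ z₂ • t` is
null as well; exchanging the order of the two variables gives the claim. -/

open ContinuousLinearMap in
theorem LipschitzWith.fderiv_comp_continuousLinearMap {𝕜 E F G : Type*} [NontriviallyNormedField 𝕜]
    [NormedAddCommGroup E] [NormedSpace 𝕜 E] [NormedAddCommGroup F] [NormedSpace 𝕜 F]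
    [NormedAddCommGroup G] [NormedSpace 𝕜 G] {f : F → G} {K : NNReal}
    (hf : Differentiable 𝕜 f) (hf' : LipschitzWith K (fderiv 𝕜 f)) (L : E →L[𝕜] F) :
    LipschitzWith (K * ‖L‖₊ ^ 2) (fderiv 𝕜 (f ∘ L)) := by
  have hderiv : fderiv 𝕜 (f ∘ L) = fun x => (fderiv 𝕜 f (L x)).comp L :=
    funext fun x => by rw [fderiv_comp x (hf _) L.differentiableAt, L.fderiv]
  refine hderiv ▸ LipschitzWith.of_dist_le_mul fun x y => ?_
  rw [dist_eq_norm, ← sub_comp, dist_eq_norm]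
  calc ‖(fderiv 𝕜 f (L x) - fderiv 𝕜 f (L y)).comp L‖
      ≤ ‖fderiv 𝕜 f (L x) - fderiv 𝕜 f (L y)‖ * ‖L‖ := opNorm_comp_le _ _
    _ ≤ K * ‖L x - L y‖ * ‖L‖ := by
      gcongr; simpa only [dist_eq_norm] using hf'.dist_le_mul (L x) (L y)
    _ ≤ K * (‖L‖ * ‖x - y‖) * ‖L‖ := by gcongr; exact map_sub L x y ▸ L.le_opNorm _
    _ = ↑(K * ‖L‖₊ ^ 2) * ‖x - y‖ := by push_cast; ring

theorem LinearEquiv.quasiMeasurePreserving {E : Type*} [NormedAddCommGroup E] [NormedSpace ℝ E]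
    [MeasurableSpace E] [BorelSpace E] [FiniteDimensional ℝ E] (μ : Measure E)
    [μ.IsAddHaarMeasure] (f : E ≃ₗ[ℝ] E) : Measure.QuasiMeasurePreserving f μ μ :=
  Measure.LinearMap.quasiMeasurePreserving μ f f.isUnit_det'.ne_zero

theorem ae_measure_preimage_smul_eq_zero {𝕜 E X : Type*} [NontriviallyNormedField 𝕜]
    [NormedAlgebra ℝ 𝕜] [MeasurableSpace 𝕜] [BorelSpace 𝕜] [SecondCountableTopology 𝕜]
    [NormedAddCommGroup E] [NormedSpace 𝕜 E] [NormedSpace ℝ E] [IsScalarTower ℝ 𝕜 E]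
    [MeasurableSpace E] [BorelSpace E] [FiniteDimensional ℝ E]
    [MeasurableSpace X] {μ : Measure X} [SFinite μ] {ν : Measure E} [ν.IsAddHaarMeasure]
    {c : X → 𝕜} (hc : Measurable c) (hc0 : ∀ᵐ x ∂μ, c x ≠ 0) {N : Set (X × E)}
    (hN : μ.prod ν N = 0) :
    ∀ᵐ t ∂ν, μ {x | (x, c x • t) ∈ N} = 0 := by
  obtain ⟨T, hNT, hT, hT0⟩ := exists_measurable_superset_of_null hN
  have hfib : ∀ᵐ x ∂μ, ∀ᵐ t ∂ν, (x, c x • t) ∉ T := by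
    filter_upwards [Measure.ae_ae_of_ae_prod (measure_eq_zero_iff_ae_notMem.1 hT0), hc0]
      with x hx hcx
    exact (((LinearEquiv.smulOfNeZero 𝕜 E _ hcx).restrictScalars ℝ).quasiMeasurePreserving ν).ae hx
  have hmeas : MeasurableSet {q : X × E | (q.1, c q.1 • q.2) ∉ T} :=
    (measurable_fst.prodMk ((hc.comp measurable_fst).smul measurable_snd) hT).compl
  filter_upwards [(Measure.ae_ae_comm hmeas).1 hfib] with t ht
  exact measure_mono_null (fun x hx => hNT hx) (measure_eq_zero_iff_ae_notMem.2 ht)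

theorem transversal_slice_general (m : ℕ)
    (φ : ℝ × ℂ × (Fin m → ℂ) → ℝ) (K : NNReal)
    (hφdiff : Differentiable ℝ φ)
    (hφlip : LipschitzWith K (fderiv ℝ φ))
    (G : Set (ℝ × ℂ × (Fin m → ℂ)))
    (hGnull : volume G = 0) :
    (∀ t : (Fin m → ℂ),
      Differentiable ℝ (fun p : ℝ × ℂ => φ (p.1, p.2, p.2 • t)) ∧
      ∃ K' : NNReal, LipschitzWith K' (fderiv ℝ (fun p : ℝ × ℂ => φ (p.1, p.2, p.2 • t)))) ∧
    (∀ᵐ t : (Fin m → ℂ),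
      volume {p : ℝ × ℂ | (p.1, p.2, p.2 • t) ∈ G} = 0) := by
  refine ⟨fun t => ?_, ?_⟩
  · let q : ℝ × ℂ →L[ℝ] ℝ × ℂ × (Fin m → ℂ) :=
      (ContinuousLinearMap.fst ℝ ℝ ℂ).prod ((ContinuousLinearMap.snd ℝ ℝ ℂ).prod
        ((ContinuousLinearMap.id ℝ ℂ).smulRight t ∘L ContinuousLinearMap.snd ℝ ℝ ℂ))
    exact ⟨hφdiff.comp q.differentiable, _, hφlip.fderiv_comp_continuousLinearMap hφdiff q⟩
  · have hz : ∀ᵐ p : ℝ × ℂ, p.2 ≠ 0 :=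
      Measure.quasiMeasurePreserving_snd.ae (measure_eq_zero_iff_ae_notMem.1 (measure_singleton 0))
    exact ae_measure_preimage_smul_eq_zero measurable_snd hz
      ((volume_preserving_prodAssoc.measure_preimage_equiv G).trans hGnull)

/-- Transversal slices preserve boundary regularity and measure-zero exceptional sets.
In graph coordinates, the boundary of `Ω ⊆ ℂⁿ` near `0` is the graph
`x₁ = φ(y₁, z₂, z'')` of a `C^{1,1}` function `φ` on `ℝ × ℂ × ℂᵐ` (`m = n - 2`), and the
slice map is `q_t(y₁, z₂) = (y₁, z₂, z₂·t)`. Then (i) for every `t` the sliced graph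
function `φ ∘ q_t` is again `C^{1,1}` (the slice `p_t(ℂ²)` is transverse to `∂Ω`, so
`∂Ω^t` is `C^{1,1}`-smooth), and (ii) if `G` (the exceptional set `F` read in graph
coordinates) has `(2n-1)`-dimensional Lebesgue measure `0`, then for almost every
`t ∈ ℂᵐ` the slice `q_t⁻¹(G)` has `3`-dimensional Lebesgue measure `0`. -/
theorem transversal_slice (m : ℕ)
    (φ : ℝ × ℂ × (Fin m → ℂ) → ℝ) (K : NNReal)
    (hφdiff : Differentiable ℝ φ)
    (hφlip : LipschitzWith K (fderiv ℝ φ))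
    (G : Set (ℝ × ℂ × (Fin m → ℂ)))
    (hGmeas : MeasurableSet G)
    (hGnull : volume G = 0) :
    (∀ t : (Fin m → ℂ),
      Differentiable ℝ (fun p : ℝ × ℂ => φ (p.1, p.2, p.2 • t)) ∧
      ∃ K' : NNReal, LipschitzWith K' (fderiv ℝ (fun p : ℝ × ℂ => φ (p.1, p.2, p.2 • t)))) ∧
    (∀ᵐ t : (Fin m → ℂ),
      volume {p : ℝ × ℂ | (p.1, p.2, p.2 • t) ∈ G} = 0) :=
  transversal_slice_general m φ K hφdiff hφlip G hGnull
end
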